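/- arXiv:2411.18832 — 10 statements merged into one kernel-verified Lean document; each statement's English description precedes it below -/
import Mathlib

section
/- Let V₁ be a real symmetric 2×2 matrix with det(V₁) ≥ 1, and let n = (Tr(V₁) − 2)/4. Then ‖V₁‖²/2 − 1 ≤ 8n² + 8n, with equality if and only if det(V₁) = 1. -/
open Matrix

noncomputable section

/-- For a real symmetric 2×2 matrix `V₁` with `det(V₁) ≥ 1` and
`n = (Tr(V₁) − 2)/4`, the single-mode-phase QFI `‖V₁‖²/2 − 1` is at most
`H_sqz(n) = 8n² + 8n`, with equality if and only if `det(V₁) = 1`. -/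
theorem stmt_2 (V₁ : Matrix (Fin 2) (Fin 2) ℝ) (hV : V₁.IsSymm)
    (hdet : 1 ≤ V₁.det) (n : ℝ) (hn : n = (V₁.trace - 2) / 4) :
    ((∑ i : Fin 2, ∑ j : Fin 2, V₁ i j ^ 2) / 2 - 1 ≤ 8 * n ^ 2 + 8 * n)
      ∧ ((∑ i : Fin 2, ∑ j : Fin 2, V₁ i j ^ 2) / 2 - 1 = 8 * n ^ 2 + 8 * n
          ↔ V₁.det = 1) := by
  have hb : V₁ 0 1 = V₁ 1 0 := hV.apply 1 0
  have hdet2 : V₁.det = V₁ 0 0 * V₁ 1 1 - V₁ 0 1 * V₁ 1 0 := Matrix.det_fin_two V₁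
  have htr : V₁.trace = V₁ 0 0 + V₁ 1 1 := Matrix.trace_fin_two V₁
  have hsum : (∑ i : Fin 2, ∑ j : Fin 2, V₁ i j ^ 2)
      = V₁ 0 0 ^ 2 + V₁ 0 1 ^ 2 + V₁ 1 0 ^ 2 + V₁ 1 1 ^ 2 := by
    simp [Fin.sum_univ_two]; ring
  have key : 8 * n ^ 2 + 8 * n
      - ((∑ i : Fin 2, ∑ j : Fin 2, V₁ i j ^ 2) / 2 - 1) = V₁.det - 1 := by
    rw [hsum, hdet2, hn, htr, hb]; ring
  constructor
  · linarith
  · constructor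
    · intro h; linarith
    · intro h; linarith
end
end

section
/- Let V₁ be a real symmetric 2×2 matrix with det(V₁) ≥ 1 and Tr(V₁) ≥ 2, and set n = (Tr(V₁) − 2)/4. Then (8n² + 8n)/2 ≤ ‖V₁‖²/2 − 1 ≤ 8n² + 8n. That is, the single-mode-phase QFI H = ‖V₁‖²/2 − 1 is constrained within a factor of 2: H_sqz(n)/2 ≤ H ≤ H_sqz(n). -/
open Matrix

noncomputable section

/-- For a real symmetric 2×2 matrix `V₁` with `det(V₁) ≥ 1` and `Tr(V₁) ≥ 2`,
setting `n = (Tr(V₁) − 2)/4`, the single-mode-phase QFI `H = ‖V₁‖²/2 − 1` satisfies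
`H_sqz(n)/2 ≤ H ≤ H_sqz(n)` where `H_sqz(n) = 8n² + 8n`. -/
theorem stmt_4 (V₁ : Matrix (Fin 2) (Fin 2) ℝ) (hV : V₁.IsSymm)
    (hdet : 1 ≤ V₁.det) (htr : 2 ≤ V₁.trace) (n : ℝ) (hn : n = (V₁.trace - 2) / 4) :
    ((8 * n ^ 2 + 8 * n) / 2 ≤ (∑ i : Fin 2, ∑ j : Fin 2, V₁ i j ^ 2) / 2 - 1)
      ∧ ((∑ i : Fin 2, ∑ j : Fin 2, V₁ i j ^ 2) / 2 - 1 ≤ 8 * n ^ 2 + 8 * n) := by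
  have hb : V₁ 1 0 = V₁ 0 1 := by
    have := hV; rw [Matrix.IsSymm] at this
    have := congrFun (congrFun this 0) 1
    simpa [Matrix.transpose_apply] using this
  have hdet' : V₁.det = V₁ 0 0 * V₁ 1 1 - V₁ 0 1 * V₁ 1 0 := by
    simp [Matrix.det_fin_two]
  have htr' : V₁.trace = V₁ 0 0 + V₁ 1 1 := by
    simp [Matrix.trace_fin_two]
  rw [htr'] at htr hn
  rw [hdet', hb] at hdet
  simp only [Fin.sum_univ_two]
  rw [hb]
  subst hn
  constructor <;> nlinarith [sq_nonneg (V₁ 0 0 - V₁ 1 1), sq_nonneg (V₁ 0 1), hb]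
end
end

section
/- Let K be a real 2N×2N matrix that is orthogonal (KᵀK = I) and symplectic (KΩKᵀ = Ω), and let r ≥ 0. Let V_in = diag(e^{−2r}, e^{2r}, …, e^{−2r}, e^{2r}) be the equally squeezed input covariance matrix. Then every 2×2 diagonal block of K·V_in·Kᵀ has trace equal to 2·cosh(2r). In particular, a passive transformation applied to equally squeezed inputs leaves the mean photon number of every mode equal to sinh²(r). -/
open Matrix

noncomputable section

/-- The 2N×2N symplectic form: N diagonal copies of `J = [[0,1],[-1,0]]`.
Modes are indexed by `Fin N`, each contributing two coordinates indexed by `Fin 2`. -/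
def Omega (N : ℕ) : Matrix (Fin N × Fin 2) (Fin N × Fin 2) ℝ :=
  Matrix.of fun p q => if p.1 = q.1 then !![(0 : ℝ), 1; -1, 0] p.2 q.2 else 0

/-- The covariance matrix `diag(e^{−2r₁}, e^{2r₁}, …, e^{−2r_N}, e^{2r_N})` of N independent
squeezed states with squeezing levels `r a`. -/
def VIn {N : ℕ} (r : Fin N → ℝ) : Matrix (Fin N × Fin 2) (Fin N × Fin 2) ℝ :=
  Matrix.diagonal fun p => Real.exp ((if p.2 = 0 then (-2 : ℝ) else 2) * r p.1)

/-- If `K` is orthogonal (`KᵀK = I`) and symplectic (`KΩKᵀ = Ω`), and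
`V_in = diag(e^{−2r}, e^{2r}, …, e^{−2r}, e^{2r})` is the equally squeezed input, then every
2×2 diagonal block of `V = K·V_in·Kᵀ` has trace `2·cosh(2r)`; in particular every mode has
mean photon number `(Tr(V_a) − 2)/4 = sinh²(r)`. -/
theorem stmt_6 (N : ℕ) (K : Matrix (Fin N × Fin 2) (Fin N × Fin 2) ℝ)
    (hKorth : Kᵀ * K = 1) (hKsymp : K * Omega N * Kᵀ = Omega N)
    (r : ℝ) (hr : 0 ≤ r)
    (V : Matrix (Fin N × Fin 2) (Fin N × Fin 2) ℝ)
    (hVdef : V = K * VIn (fun _ => r) * Kᵀ) :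
    ∀ a : Fin N,
      (∑ i : Fin 2, V (a, i) (a, i)) = 2 * Real.cosh (2 * r)
        ∧ ((∑ i : Fin 2, V (a, i) (a, i)) - 2) / 4 = Real.sinh r ^ 2 := by
  have hKK : K * Kᵀ = 1 := by
    rw [mul_eq_one_comm] at hKorth; exact hKorth
  have hcomm : K * Omega N = Omega N * K := by
    calc K * Omega N = K * Omega N * (Kᵀ * K) := by rw [hKorth, mul_one]
    _ = (K * Omega N * Kᵀ) * K := by simp only [mul_assoc]
    _ = Omega N * K := by rw [hKsymp]
  intro a
  -- entrywise consequences of the commutation relation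
  have h1 : ∀ b : Fin N, K (a,1) (b,1) = K (a,0) (b,0) := by
    intro b
    have := congrFun (congrFun hcomm (a, 0)) (b, 1)
    simp [Matrix.mul_apply, Omega, Fintype.sum_prod_type, Fin.sum_univ_two,
      Matrix.of_apply, Finset.sum_ite_eq] at this
    linarith
  have h2 : ∀ b : Fin N, K (a,1) (b,0) = -K (a,0) (b,1) := by
    intro b
    have := congrFun (congrFun hcomm (a, 1)) (b, 1)
    simp [Matrix.mul_apply, Omega, Fintype.sum_prod_type, Fin.sum_univ_two,
      Matrix.of_apply, Finset.sum_ite_eq] at this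
    linarith
  have hnorm : ∑ b : Fin N, (K (a,0) (b,0) ^ 2 + K (a,0) (b,1) ^ 2) = 1 := by
    have := congrFun (congrFun hKK (a, 0)) (a, 0)
    simp [Matrix.mul_apply, Fintype.sum_prod_type, Fin.sum_univ_two,
      Matrix.one_apply, Matrix.transpose_apply] at this
    rw [← this]
    apply Finset.sum_congr rfl
    intro b _
    ring
  have hsum : (∑ i : Fin 2, V (a, i) (a, i))
      = (∑ b : Fin N, (K (a,0) (b,0) ^ 2 + K (a,0) (b,1) ^ 2))
        * (Real.exp (-(2*r)) + Real.exp (2*r)) := by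
    subst hVdef
    simp only [Matrix.mul_apply, VIn, Matrix.diagonal_apply, Matrix.transpose_apply,
      Fintype.sum_prod_type, Fin.sum_univ_two, Finset.sum_mul, Finset.mul_sum]
    rw [← Finset.sum_add_distrib]
    apply Finset.sum_congr rfl
    intro b _
    simp [Fin.sum_univ_two, h1 b, h2 b]
    ring
  have hcosh : Real.exp (-(2*r)) + Real.exp (2*r) = 2 * Real.cosh (2*r) := by
    rw [Real.cosh_eq]; ring
  have htr : (∑ i : Fin 2, V (a, i) (a, i)) = 2 * Real.cosh (2 * r) := by
    rw [hsum, hnorm, one_mul, hcosh]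
  refine ⟨htr, ?_⟩
  rw [htr, Real.cosh_two_mul]
  have hs : Real.sinh r ^ 2 = Real.cosh r ^ 2 - 1 := by
    have := Real.cosh_sq_sub_sinh_sq r
    nlinarith
  rw [hs]; ring
end
end

section
/- Let K be a real 4×4 orthogonal symplectic matrix, r₁, r₂ ≥ 0, V_in = diag(e^{−2r₁}, e^{2r₁}, e^{−2r₂}, e^{2r₂}), and V = K·V_in·Kᵀ, with upper-left 2×2 block V₁ and lower-right 2×2 block V₂. Let g₁, g₂ be real, G = diag(g₁, g₁, g₂, g₂), and H := (Tr((V·G)²) − Tr(G²))/2. Setting H_sqz(n) := 8n² + 8n, n_in,a := sinh²(r_a), and n_rot,a := (Tr(V_a) − 2)/4, one has H = g₁g₂·(H_sqz(n_in,1) + H_sqz(n_in,2)) + (g₁² − g₁g₂)·H_sqz(n_rot,1) + (g₂² − g₁g₂)·H_sqz(n_rot,2) − (g₁ − g₂)²·(det(V₁) − 1). -/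
open Matrix

noncomputable section

/-- The a-th diagonal 2×2 block of a 2N×2N matrix. -/
def dblock {N : ℕ} (V : Matrix (Fin N × Fin 2) (Fin N × Fin 2) ℝ) (a : Fin N) :
    Matrix (Fin 2) (Fin 2) ℝ :=
  Matrix.of fun i j => V (a, i) (a, j)

/-- The phase-shift generator `G = diag(g₁, g₁, …, g_N, g_N)`. -/
def Gmat {N : ℕ} (g : Fin N → ℝ) : Matrix (Fin N × Fin 2) (Fin N × Fin 2) ℝ :=
  Matrix.diagonal fun p => g p.1

/-- The QFI functional `H(V, G) := (Tr((V·G)²) − Tr(G²))/2`. -/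
def qfi {N : ℕ} (V G : Matrix (Fin N × Fin 2) (Fin N × Fin 2) ℝ) : ℝ :=
  (Matrix.trace ((V * G) ^ 2) - Matrix.trace (G ^ 2)) / 2

/-- `H_sqz(n) = 8n² + 8n`, the QFI of a single-mode squeezed state of mean photon number n. -/
def Hsqz (n : ℝ) : ℝ := 8 * n ^ 2 + 8 * n

/-- The mean photon number of mode a of a covariance matrix: `(Tr(V_a) − 2)/4`. -/
def photon {N : ℕ} (V : Matrix (Fin N × Fin 2) (Fin N × Fin 2) ℝ) (a : Fin N) : ℝ :=
  ((dblock V a).trace - 2) / 4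


/-! Split `V` into 2×2 blocks `V_ab`. Since `G` is scalar on each mode,
`Tr((VG)²) = Σ g_a g_b Tr(V_ab V_ba) = g₁g₂ Tr(V²) + (g₁² − g₁g₂) Tr(V₁²) + (g₂² − g₁g₂) Tr(V₂²)`.
Orthogonality of `K` gives `Tr(V²) = Tr(V_in²) = Σ_a (2 H_sqz(sinh² r_a) + 2)`, and for a 2×2 block
`Tr(V_a²) = Tr(V_a)² − 2 det V_a` with `Tr(V_a)² = 2 H_sqz(n_rot,a) + 4`. Finally `V` is symmetric
with `VΩV = Ω`; the `((a,0),(a,1))` entry of this identity reads `Σ_b det V_ab = 1`, and since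
`det V₁₂ = det V₂₁` both reduced states have the same determinant `det V₁ = det V₂`. -/

section Conjugation

variable {n R : Type*} [Fintype n] [CommSemiring R] {K D Ω : Matrix n n R}

lemma Matrix.IsSymm.mul_mul_transpose (hD : D.IsSymm) (K : Matrix n n R) :
    (K * D * Kᵀ).IsSymm := by
  rw [IsSymm, transpose_mul, transpose_mul, hD.eq, transpose_transpose, Matrix.mul_assoc]

variable [DecidableEq n]

lemma transpose_mul_mul_eq_of_orthogonal (hK : Kᵀ * K = 1) (hKΩ : K * Ω * Kᵀ = Ω) :
    Kᵀ * Ω * K = Ω :=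
  calc Kᵀ * Ω * K = Kᵀ * (K * Ω * Kᵀ) * K := by rw [hKΩ]
    _ = (Kᵀ * K) * Ω * (Kᵀ * K) := by simp only [Matrix.mul_assoc]
    _ = Ω := by rw [hK, Matrix.one_mul, Matrix.mul_one]

lemma conj_mul_mul_conj_eq (hK : Kᵀ * K = 1) (hKΩ : K * Ω * Kᵀ = Ω) (hD : D * Ω * D = Ω) :
    (K * D * Kᵀ) * Ω * (K * D * Kᵀ) = Ω :=
  calc (K * D * Kᵀ) * Ω * (K * D * Kᵀ) = K * (D * (Kᵀ * Ω * K) * D) * Kᵀ := by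
        simp only [Matrix.mul_assoc]
    _ = Ω := by rw [transpose_mul_mul_eq_of_orthogonal hK hKΩ, hD, hKΩ]

lemma trace_conj_mul_self (hK : Kᵀ * K = 1) :
    trace ((K * D * Kᵀ) * (K * D * Kᵀ)) = trace (D * D) :=
  calc trace ((K * D * Kᵀ) * (K * D * Kᵀ)) = trace (K * (D * (Kᵀ * K) * D * Kᵀ)) := by
        simp only [Matrix.mul_assoc]
    _ = trace (D * D * Kᵀ * K) := by rw [hK, Matrix.mul_one, trace_mul_comm]
    _ = trace (D * D) := by rw [Matrix.mul_assoc, hK, Matrix.mul_one]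

end Conjugation

lemma trace_mul_self_fin_two {R : Type*} [CommRing R] (A : Matrix (Fin 2) (Fin 2) R) :
    trace (A * A) = trace A ^ 2 - 2 * det A := by
  simp only [trace_fin_two, det_fin_two, mul_apply, Fin.sum_univ_two]
  ring

lemma exp_neg_two_mul_sq_add_exp_two_mul_sq (r : ℝ) :
    Real.exp (-2 * r) ^ 2 + Real.exp (2 * r) ^ 2 = 2 * Hsqz (Real.sinh r ^ 2) + 2 := by
  have hu : Real.exp r ≠ 0 := (Real.exp_pos r).ne'
  rw [Real.sinh_eq, Real.exp_neg, neg_mul, Real.exp_neg, two_mul, Real.exp_add, Hsqz]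
  field_simp
  ring

section Modes

variable {N : ℕ}

lemma isSymm_VIn (r : Fin N → ℝ) : (VIn r).IsSymm := isSymm_diagonal _

lemma VIn_mul_Omega_mul_VIn (r : Fin N → ℝ) : VIn r * Omega N * VIn r = Omega N := by
  ext ⟨a, i⟩ ⟨b, j⟩
  by_cases hab : a = b
  · subst hab
    fin_cases i <;> fin_cases j <;> simp [VIn, Omega, ← Real.exp_add]
  · simp [VIn, Omega, hab]

lemma trace_VIn_mul_VIn (r : Fin N → ℝ) :
    trace (VIn r * VIn r) = ∑ a, (2 * Hsqz (Real.sinh (r a) ^ 2) + 2) := by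
  simp only [VIn, diagonal_mul_diagonal, trace_diagonal, Fintype.sum_prod_type, Fin.sum_univ_two]
  refine Finset.sum_congr rfl fun a _ => ?_
  simpa [sq] using exp_neg_two_mul_sq_add_exp_two_mul_sq (r a)

lemma sq_trace_dblock (V : Matrix (Fin N × Fin 2) (Fin N × Fin 2) ℝ) (a : Fin N) :
    (dblock V a).trace ^ 2 = 2 * Hsqz (photon V a) + 4 := by
  unfold photon Hsqz
  ring

def block (V : Matrix (Fin N × Fin 2) (Fin N × Fin 2) ℝ) (a b : Fin N) :
    Matrix (Fin 2) (Fin 2) ℝ :=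
  of fun i j => V (a, i) (b, j)

lemma dblock_eq_block (V : Matrix (Fin N × Fin 2) (Fin N × Fin 2) ℝ) (a : Fin N) :
    dblock V a = block V a a :=
  rfl

lemma Matrix.IsSymm.block_transpose {V : Matrix (Fin N × Fin 2) (Fin N × Fin 2) ℝ}
    (hV : V.IsSymm) (a b : Fin N) : (block V a b)ᵀ = block V b a := by
  ext i j
  exact (hV.apply (a, j) (b, i)).symm

lemma trace_mul_Gmat_sq (V : Matrix (Fin N × Fin 2) (Fin N × Fin 2) ℝ) (g : Fin N → ℝ) :
    trace ((V * Gmat g) ^ 2) = ∑ a, ∑ b, g a * g b * trace (block V a b * block V b a) := by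
  have hVG : ∀ p q, (V * Gmat g) p q = V p q * g q.1 := fun p q => mul_diagonal _ _ _ _
  simp only [sq, trace, diag, mul_apply (M := V * Gmat g), hVG]
  simp only [mul_apply, block, of_apply, Fintype.sum_prod_type, Finset.mul_sum]
  refine Finset.sum_congr rfl fun a _ => ?_
  rw [Finset.sum_comm]
  refine Finset.sum_congr rfl fun b _ => ?_
  exact Finset.sum_congr rfl fun i _ => Finset.sum_congr rfl fun j _ => by ring

lemma trace_mul_self_eq_sum_block (V : Matrix (Fin N × Fin 2) (Fin N × Fin 2) ℝ) :
    trace (V * V) = ∑ a, ∑ b, trace (block V a b * block V b a) := by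
  simpa [Gmat, sq] using trace_mul_Gmat_sq V fun _ => 1

lemma trace_Gmat_sq (g : Fin N → ℝ) : trace (Gmat g ^ 2) = 2 * ∑ a, g a ^ 2 := by
  simp [Gmat, sq, trace_diagonal, Fintype.sum_prod_type, Finset.mul_sum]

lemma mul_Omega_mul_apply (V W : Matrix (Fin N × Fin 2) (Fin N × Fin 2) ℝ) (p q) :
    (V * Omega N * W) p q = ∑ b, (V p (b, 0) * W (b, 1) q - V p (b, 1) * W (b, 0) q) := by
  simp [mul_apply, Omega, Fintype.sum_prod_type, Fin.sum_univ_two, neg_add_eq_sub]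

lemma sum_det_block_eq_one {V : Matrix (Fin N × Fin 2) (Fin N × Fin 2) ℝ} (hV : V.IsSymm)
    (hΩ : V * Omega N * V = Omega N) (a : Fin N) : ∑ b, (block V a b).det = 1 := by
  have h := congrFun (congrFun hΩ (a, 0)) (a, 1)
  rw [mul_Omega_mul_apply, show Omega N (a, 0) (a, 1) = 1 by simp [Omega]] at h
  rw [← h]
  refine Finset.sum_congr rfl fun b _ => ?_
  rw [det_fin_two, hV.apply (a, 1) (b, 1), hV.apply (a, 1) (b, 0)]
  rfl

end Modes

lemma det_dblock_zero_eq_det_dblock_one {V : Matrix (Fin 2 × Fin 2) (Fin 2 × Fin 2) ℝ}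
    (hV : V.IsSymm) (hΩ : V * Omega 2 * V = Omega 2) :
    (dblock V 0).det = (dblock V 1).det := by
  have h0 := sum_det_block_eq_one hV hΩ 0
  have h1 := sum_det_block_eq_one hV hΩ 1
  have h10 : (block V 1 0).det = (block V 0 1).det := by
    rw [← hV.block_transpose, det_transpose]
  simp only [Fin.sum_univ_two] at h0 h1
  rw [dblock_eq_block, dblock_eq_block]
  linarith

lemma qfi_Gmat_two (V : Matrix (Fin 2 × Fin 2) (Fin 2 × Fin 2) ℝ) (g₁ g₂ : ℝ) :
    qfi V (Gmat ![g₁, g₂])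
      = (g₁ * g₂ * trace (V * V) + (g₁ ^ 2 - g₁ * g₂) * trace (dblock V 0 * dblock V 0)
          + (g₂ ^ 2 - g₁ * g₂) * trace (dblock V 1 * dblock V 1)) / 2 - g₁ ^ 2 - g₂ ^ 2 := by
  have hcomm : trace (block V 1 0 * block V 0 1) = trace (block V 0 1 * block V 1 0) :=
    trace_mul_comm _ _
  rw [qfi, trace_mul_Gmat_sq, trace_Gmat_sq, trace_mul_self_eq_sum_block]
  simp only [Fin.sum_univ_two, Matrix.cons_val_zero, Matrix.cons_val_one, hcomm]
  rw [dblock_eq_block, dblock_eq_block]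
  ring

theorem stmt_8_general (K : Matrix (Fin 2 × Fin 2) (Fin 2 × Fin 2) ℝ)
    (hKorth : Kᵀ * K = 1) (hKsymp : K * Omega 2 * Kᵀ = Omega 2)
    (r₁ r₂ : ℝ)
    (V : Matrix (Fin 2 × Fin 2) (Fin 2 × Fin 2) ℝ)
    (hVdef : V = K * VIn ![r₁, r₂] * Kᵀ)
    (g₁ g₂ : ℝ) :
    qfi V (Gmat ![g₁, g₂])
      = g₁ * g₂ * (Hsqz (Real.sinh r₁ ^ 2) + Hsqz (Real.sinh r₂ ^ 2))
        + (g₁ ^ 2 - g₁ * g₂) * Hsqz (photon V 0)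
        + (g₂ ^ 2 - g₁ * g₂) * Hsqz (photon V 1)
        - (g₁ - g₂) ^ 2 * ((dblock V 0).det - 1) := by
  have hsymm : V.IsSymm := hVdef ▸ (isSymm_VIn _).mul_mul_transpose K
  have hsympl : V * Omega 2 * V = Omega 2 :=
    hVdef ▸ conj_mul_mul_conj_eq hKorth hKsymp (VIn_mul_Omega_mul_VIn _)
  have htrace : trace (V * V)
      = 2 * Hsqz (Real.sinh r₁ ^ 2) + 2 * Hsqz (Real.sinh r₂ ^ 2) + 4 := by
    rw [hVdef, trace_conj_mul_self hKorth, trace_VIn_mul_VIn, Fin.sum_univ_two]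
    simp only [Matrix.cons_val_zero, Matrix.cons_val_one]
    ring
  rw [qfi_Gmat_two, htrace, trace_mul_self_fin_two, trace_mul_self_fin_two, sq_trace_dblock,
    sq_trace_dblock, ← det_dblock_zero_eq_det_dblock_one hsymm hsympl]
  ring

/-- two-mode trade-off formula (Eq. 10 of the paper). For a 4×4 orthogonal
symplectic `K`, `V = K·diag(e^{−2r₁}, e^{2r₁}, e^{−2r₂}, e^{2r₂})·Kᵀ` and
`G = diag(g₁, g₁, g₂, g₂)`, the QFI `H = (Tr((V·G)²) − Tr(G²))/2` satisfies
`H = g₁g₂·(H_sqz(n_in,1) + H_sqz(n_in,2)) + (g₁² − g₁g₂)·H_sqz(n_rot,1)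
   + (g₂² − g₁g₂)·H_sqz(n_rot,2) − (g₁ − g₂)²·(det(V₁) − 1)`,
where `n_in,a = sinh²(r_a)`, `n_rot,a = (Tr(V_a) − 2)/4`, and `det(V₁) − 1 = 1/μ² − 1`. -/
theorem stmt_8 (K : Matrix (Fin 2 × Fin 2) (Fin 2 × Fin 2) ℝ)
    (hKorth : Kᵀ * K = 1) (hKsymp : K * Omega 2 * Kᵀ = Omega 2)
    (r₁ r₂ : ℝ) (hr₁ : 0 ≤ r₁) (hr₂ : 0 ≤ r₂)
    (V : Matrix (Fin 2 × Fin 2) (Fin 2 × Fin 2) ℝ)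
    (hVdef : V = K * VIn ![r₁, r₂] * Kᵀ)
    (g₁ g₂ : ℝ) :
    qfi V (Gmat ![g₁, g₂])
      = g₁ * g₂ * (Hsqz (Real.sinh r₁ ^ 2) + Hsqz (Real.sinh r₂ ^ 2))
        + (g₁ ^ 2 - g₁ * g₂) * Hsqz (photon V 0)
        + (g₂ ^ 2 - g₁ * g₂) * Hsqz (photon V 1)
        - (g₁ - g₂) ^ 2 * ((dblock V 0).det - 1) :=
  stmt_8_general K hKorth hKsymp r₁ r₂ V hVdef g₁ g₂
end
end

section
/- Let K be a real 4×4 orthogonal symplectic matrix, r ≥ 0, V_in = diag(e^{−2r}, e^{2r}, e^{−2r}, e^{2r}) (equal squeezing), and V = K·V_in·Kᵀ with upper-left 2×2 block V₁. Let g₁, g₂ be real, G = diag(g₁, g₁, g₂, g₂), and H := (Tr((V·G)²) − Tr(G²))/2. Then with n := sinh²(r) and H_sqz(n) := 8n² + 8n, H = (g₁² + g₂²)·H_sqz(n) − (g₁ − g₂)²·(det(V₁) − 1). -/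
open Matrix

noncomputable section

/-!
With equal squeezing, `VIn ![r, r] = cosh 2r • 1 + sinh 2r • D` for `D = diag(-1, 1, -1, 1)`, so
`V = cosh 2r • 1 + sinh 2r • M` with `M = K D Kᵀ`. Since `K` is orthogonal and commutes with `Ω`,
`M` is a symmetric involution anticommuting with `Ω`: every 2×2 block of `M` has the form
`[[a, b], [b, -a]]` and the rows of `M` are unit vectors. For diagonal `G` and symmetric `V`,
`Tr((V G)²) = ∑ g_p g_q V_pq²`, and in these entries both sides of the trade-off are the same
polynomial.
-/

def modeSign (N : ℕ) : Matrix (Fin N × Fin 2) (Fin N × Fin 2) ℝ :=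
  diagonal fun p => if p.2 = 0 then -1 else 1

theorem transpose_modeSign (N : ℕ) : (modeSign N)ᵀ = modeSign N :=
  diagonal_transpose _

theorem modeSign_mul_self (N : ℕ) : modeSign N * modeSign N = 1 := by
  rw [modeSign, diagonal_mul_diagonal, ← diagonal_one]
  congr 1
  ext p
  split_ifs <;> norm_num

theorem modeSign_mul_Omega (N : ℕ) : modeSign N * Omega N = -(Omega N * modeSign N) := by
  ext ⟨a, i⟩ ⟨b, j⟩
  fin_cases i <;> fin_cases j <;> simp [modeSign, Omega, apply_ite]

theorem VIn_const (N : ℕ) (r : ℝ) :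
    VIn (fun _ : Fin N => r) = Real.cosh (2 * r) • 1 + Real.sinh (2 * r) • modeSign N := by
  ext ⟨a, i⟩ ⟨b, j⟩
  fin_cases i <;> fin_cases j <;> by_cases hab : a = b <;>
    simp [VIn, modeSign, one_apply, hab, ← Real.cosh_add_sinh]

theorem Hsqz_sinh_sq (r : ℝ) : Hsqz (Real.sinh r ^ 2) = 2 * Real.sinh (2 * r) ^ 2 := by
  rw [Hsqz, Real.sinh_two_mul]
  linear_combination (-8 * Real.sinh r ^ 2) * Real.cosh_sq r

theorem commute_Omega_of_orthogonal_symplectic {N : ℕ}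
    {K : Matrix (Fin N × Fin 2) (Fin N × Fin 2) ℝ} (hKorth : Kᵀ * K = 1) (hKsymp : K * Omega N * Kᵀ = Omega N) : K * Omega N = Omega N * K := by
  have := congrArg (· * K) hKsymp
  simpa [Matrix.mul_assoc, hKorth] using this

section Conjugation

variable {n : Type*} [Fintype n] {K D X : Matrix n n ℝ}

theorem transpose_mul_mul_transpose (hD : Dᵀ = D) : (K * D * Kᵀ)ᵀ = K * D * Kᵀ := by
  simp [transpose_mul, hD, Matrix.mul_assoc]

theorem mul_mul_transpose_mul_self [DecidableEq n] (hK : Kᵀ * K = 1) (hD : D * D = 1) :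
    K * D * Kᵀ * (K * D * Kᵀ) = 1 := by
  calc K * D * Kᵀ * (K * D * Kᵀ) = K * (D * (Kᵀ * K) * D) * Kᵀ := by simp only [Matrix.mul_assoc]
    _ = 1 := by rw [hK, Matrix.mul_one, hD, Matrix.mul_one, mul_eq_one_comm.mp hK]

theorem transpose_mul_comm_of_mul_comm [DecidableEq n] (hK : Kᵀ * K = 1) (hKX : K * X = X * K) :
    Kᵀ * X = X * Kᵀ := by
  calc Kᵀ * X = Kᵀ * (X * K) * Kᵀ := by
        rw [Matrix.mul_assoc, Matrix.mul_assoc, mul_eq_one_comm.mp hK, Matrix.mul_one]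
    _ = X * Kᵀ := by rw [← hKX, ← Matrix.mul_assoc, hK, Matrix.one_mul]

theorem mul_mul_transpose_anticomm [DecidableEq n] (hK : Kᵀ * K = 1) (hKX : K * X = X * K)
    (hDX : D * X = -(X * D)) : K * D * Kᵀ * X = -(X * (K * D * Kᵀ)) := by
  calc K * D * Kᵀ * X = K * (D * X) * Kᵀ := by
        rw [Matrix.mul_assoc, transpose_mul_comm_of_mul_comm hK hKX, ← Matrix.mul_assoc,
          Matrix.mul_assoc K]
    _ = -(X * (K * D * Kᵀ)) := by
        rw [hDX, Matrix.mul_neg, Matrix.neg_mul, ← Matrix.mul_assoc, hKX]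
        simp only [Matrix.mul_assoc]

end Conjugation

theorem trace_mul_diagonal_sq {n α : Type*} [Fintype n] [DecidableEq n] [CommSemiring α]
    {V : Matrix n n α} (hV : Vᵀ = V) (d : n → α) :
    trace ((V * diagonal d) ^ 2) = ∑ p, ∑ q, d p * d q * V p q ^ 2 := by
  rw [sq, trace]
  simp only [diag, mul_apply (M := V * diagonal d), mul_diagonal]
  refine Finset.sum_congr rfl fun p _ => Finset.sum_congr rfl fun q _ => ?_
  rw [← transpose_apply V q p, hV]
  ring

theorem apply_of_mul_Omega_eq_neg {N : ℕ} {M : Matrix (Fin N × Fin 2) (Fin N × Fin 2) ℝ}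
    (h : M * Omega N = -(Omega N * M)) (a b : Fin N) :
    M (a, 1) (b, 1) = -M (a, 0) (b, 0) ∧ M (a, 1) (b, 0) = M (a, 0) (b, 1) := by
  have h₁ := congrFun (congrFun h (a, 0)) (b, 1)
  have h₂ := congrFun (congrFun h (a, 0)) (b, 0)
  simp only [Omega, of_apply, cons_val', cons_val_fin_one, Fin.isValue, mul_apply, cons_val_one,
    mul_ite, mul_zero, Fintype.sum_prod_type, Finset.sum_ite_irrel, Fin.sum_univ_two, cons_val_zero,
    mul_one, add_zero, Finset.sum_const_zero, Finset.sum_ite_eq', Finset.mem_univ, ↓reduceIte,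
    Matrix.neg_apply, ite_mul, zero_mul, one_mul, zero_add, Finset.sum_ite_eq, mul_neg,
    neg_inj] at h₁ h₂
  constructor <;> linarith

theorem qfi_two_mode {M : Matrix (Fin 2 × Fin 2) (Fin 2 × Fin 2) ℝ} (hsymm : Mᵀ = M)
    (hinv : M * M = 1) (hanti : M * Omega 2 = -(Omega 2 * M)) {c s : ℝ} (hcs : c ^ 2 = 1 + s ^ 2)
    (g₁ g₂ : ℝ) :
    qfi (c • 1 + s • M) (Gmat ![g₁, g₂])
      = (g₁ ^ 2 + g₂ ^ 2) * (2 * s ^ 2) - (g₁ - g₂) ^ 2 * ((dblock (c • 1 + s • M) 0).det - 1) := by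
  have hV : (c • 1 + s • M)ᵀ = c • 1 + s • M := by simp [hsymm]
  have hM : ∀ p q, M q p = M p q := fun p q => by rw [← transpose_apply M p q, hsymm]
  obtain ⟨h₀₀, h₀₀'⟩ := apply_of_mul_Omega_eq_neg hanti 0 0
  obtain ⟨h₀₁, h₀₁'⟩ := apply_of_mul_Omega_eq_neg hanti 0 1
  obtain ⟨h₁₁, h₁₁'⟩ := apply_of_mul_Omega_eq_neg hanti 1 1
  have hs₁ : M (1, 0) (0, 0) = M (0, 0) (1, 0) := hM _ _
  have hs₂ : M (1, 0) (0, 1) = M (0, 0) (1, 1) := (hM _ _).trans h₀₁'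
  have hs₃ : M (1, 1) (0, 0) = M (0, 0) (1, 1) := hM _ _
  have hs₄ : M (1, 1) (0, 1) = -M (0, 0) (1, 0) := (hM _ _).trans h₀₁
  have hrow₀ := congrFun (congrFun hinv (0, 0)) (0, 0)
  have hrow₁ := congrFun (congrFun hinv (1, 0)) (1, 0)
  simp only [mul_apply, Fintype.sum_prod_type, Fin.sum_univ_two, one_apply_eq] at hrow₀ hrow₁
  rw [qfi, Gmat, trace_mul_diagonal_sq hV, diagonal_pow, trace_diagonal]
  simp only [Matrix.add_apply, Matrix.smul_apply, one_apply, smul_eq_mul, mul_ite, mul_one,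
    mul_zero, Fintype.sum_prod_type, Fin.sum_univ_two, Fin.isValue, cons_val_zero, cons_val_one,
    cons_val_fin_one, Prod.mk.injEq, and_true, zero_ne_one, and_false, ↓reduceIte, zero_add,
    one_ne_zero, Pi.pow_apply, Finset.sum_const, Finset.card_univ, Fintype.card_fin, nsmul_eq_mul,
    Nat.cast_ofNat, dblock, true_and, det_fin_two, of_apply]
  simp only [h₀₀, h₀₀', h₀₁, h₀₁', h₁₁, h₁₁', hs₁, hs₂, hs₃, hs₄] at hrow₀ hrow₁ ⊢
  linear_combination (g₁ ^ 2 + g₂ ^ 2 + (g₁ - g₂) ^ 2) * hcs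
    + s ^ 2 * g₂ * (2 * g₁ - g₂) * hrow₀ + s ^ 2 * g₂ ^ 2 * hrow₁

theorem stmt_9_general (K : Matrix (Fin 2 × Fin 2) (Fin 2 × Fin 2) ℝ)
    (hKorth : Kᵀ * K = 1) (hKsymp : K * Omega 2 * Kᵀ = Omega 2)
    (r : ℝ)
    (V : Matrix (Fin 2 × Fin 2) (Fin 2 × Fin 2) ℝ)
    (hVdef : V = K * VIn ![r, r] * Kᵀ)
    (g₁ g₂ : ℝ) :
    qfi V (Gmat ![g₁, g₂])
      = (g₁ ^ 2 + g₂ ^ 2) * Hsqz (Real.sinh r ^ 2)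
        - (g₁ - g₂) ^ 2 * ((dblock V 0).det - 1) := by
  have hV : V = Real.cosh (2 * r) • 1 + Real.sinh (2 * r) • (K * modeSign 2 * Kᵀ) := by
    rw [hVdef, vec_single_eq_const, vecCons_const, VIn_const, Matrix.mul_add, Matrix.add_mul,
      Matrix.mul_smul, Matrix.smul_mul, Matrix.mul_one, mul_eq_one_comm.mp hKorth,
      Matrix.mul_smul, Matrix.smul_mul]
  have hKΩ := commute_Omega_of_orthogonal_symplectic hKorth hKsymp
  rw [hV, Hsqz_sinh_sq, qfi_two_mode (transpose_mul_mul_transpose (transpose_modeSign 2))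
    (mul_mul_transpose_mul_self hKorth (modeSign_mul_self 2))
    (mul_mul_transpose_anticomm hKorth hKΩ (modeSign_mul_Omega 2))
    (by rw [Real.cosh_sq]; ring)]

/-- equally squeezed two-mode trade-off formula (Eq. 11 of the paper). For a 4×4
orthogonal symplectic `K`, `V = K·diag(e^{−2r}, e^{2r}, e^{−2r}, e^{2r})·Kᵀ` with upper-left
block `V₁`, and `G = diag(g₁, g₁, g₂, g₂)`, the QFI `H = (Tr((V·G)²) − Tr(G²))/2` satisfies
`H = (g₁² + g₂²)·H_sqz(n) − (g₁ − g₂)²·(det(V₁) − 1)` with `n = sinh²(r)`. -/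
theorem stmt_9 (K : Matrix (Fin 2 × Fin 2) (Fin 2 × Fin 2) ℝ)
    (hKorth : Kᵀ * K = 1) (hKsymp : K * Omega 2 * Kᵀ = Omega 2)
    (r : ℝ) (hr : 0 ≤ r)
    (V : Matrix (Fin 2 × Fin 2) (Fin 2 × Fin 2) ℝ)
    (hVdef : V = K * VIn ![r, r] * Kᵀ)
    (g₁ g₂ : ℝ) :
    qfi V (Gmat ![g₁, g₂])
      = (g₁ ^ 2 + g₂ ^ 2) * Hsqz (Real.sinh r ^ 2)
        - (g₁ - g₂) ^ 2 * ((dblock V 0).det - 1) :=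
  stmt_9_general K hKorth hKsymp r V hVdef g₁ g₂
end
end

section
/- Let K be a real 4×4 orthogonal symplectic matrix, r₁, r₂ ≥ 0, V_in = diag(e^{−2r₁}, e^{2r₁}, e^{−2r₂}, e^{2r₂}), and V = K·V_in·Kᵀ. Then the common-phase QFI H_com := Tr(V²)/2 − 2 is independent of K and equals 2·sinh²(2r₁) + 2·sinh²(2r₂) = H_sqz(sinh² r₁) + H_sqz(sinh² r₂), where H_sqz(n) := 8n² + 8n. -/
open Matrix

noncomputable section

/-- for a 4×4 orthogonal symplectic `K` and
`V = K·diag(e^{−2r₁}, e^{2r₁}, e^{−2r₂}, e^{2r₂})·Kᵀ`, the common-phase QFI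
`H_com = Tr(V²)/2 − 2` is independent of `K` and equals
`2·sinh²(2r₁) + 2·sinh²(2r₂) = H_sqz(sinh² r₁) + H_sqz(sinh² r₂)`. -/
theorem stmt_11 (K : Matrix (Fin 2 × Fin 2) (Fin 2 × Fin 2) ℝ)
    (hKorth : Kᵀ * K = 1) (hKsymp : K * Omega 2 * Kᵀ = Omega 2)
    (r₁ r₂ : ℝ) (hr₁ : 0 ≤ r₁) (hr₂ : 0 ≤ r₂)
    (V : Matrix (Fin 2 × Fin 2) (Fin 2 × Fin 2) ℝ)
    (hVdef : V = K * VIn ![r₁, r₂] * Kᵀ) :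
    Matrix.trace (V ^ 2) / 2 - 2
        = 2 * Real.sinh (2 * r₁) ^ 2 + 2 * Real.sinh (2 * r₂) ^ 2
      ∧ Matrix.trace (V ^ 2) / 2 - 2
        = Hsqz (Real.sinh r₁ ^ 2) + Hsqz (Real.sinh r₂ ^ 2) := by
  have hD : V ^ 2 = K * (VIn ![r₁, r₂] ^ 2) * Kᵀ := by
    rw [hVdef, pow_two, pow_two]
    have : K * VIn ![r₁, r₂] * Kᵀ * (K * VIn ![r₁, r₂] * Kᵀ)
        = K * VIn ![r₁, r₂] * (Kᵀ * K) * VIn ![r₁, r₂] * Kᵀ := by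
      noncomm_ring
    rw [this, hKorth]
    noncomm_ring
  have htr : Matrix.trace (V ^ 2) = Matrix.trace (VIn ![r₁, r₂] ^ 2) := by
    rw [hD, Matrix.trace_mul_cycle, hKorth, Matrix.one_mul]
  have htr2 : Matrix.trace (V ^ 2)
      = Real.exp (-2 * r₁) ^ 2 + Real.exp (2 * r₁) ^ 2
        + Real.exp (-2 * r₂) ^ 2 + Real.exp (2 * r₂) ^ 2 := by
    rw [htr, VIn, Matrix.diagonal_pow, Matrix.trace_diagonal]
    rw [Fintype.sum_prod_type]
    simp [Fin.sum_univ_succ]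
    ring
  have key : ∀ r : ℝ, (Real.exp (-2 * r) ^ 2 + Real.exp (2 * r) ^ 2) / 2 - 1
      = 2 * Real.sinh (2 * r) ^ 2 := by
    intro r
    have h1 : Real.exp (-(r * 2)) * Real.exp (r * 2) = 1 := by
      rw [← Real.exp_add]; simp
    rw [Real.sinh_eq]
    ring_nf
    linarith [h1]
  have h1 : Matrix.trace (V ^ 2) / 2 - 2
      = 2 * Real.sinh (2 * r₁) ^ 2 + 2 * Real.sinh (2 * r₂) ^ 2 := by
    rw [htr2]
    have := key r₁
    have := key r₂
    linarith
  refine ⟨h1, h1.trans ?_⟩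
  have hs : ∀ r : ℝ, 2 * Real.sinh (2 * r) ^ 2 = Hsqz (Real.sinh r ^ 2) := by
    intro r
    have hc := Real.cosh_sq r
    rw [Real.sinh_two_mul, Hsqz]
    nlinarith [hc]
  rw [hs r₁, hs r₂]
end
end

section
/- (Proposition 1) Let K be a real 2N×2N orthogonal symplectic matrix, r₁, …, r_N ≥ 0, V_in = diag(e^{−2r₁}, e^{2r₁}, …, e^{−2r_N}, e^{2r_N}), and V = K·V_in·Kᵀ. Then all off-diagonal 2×2 blocks of V vanish (V is decoupled) if and only if there exists a permutation σ of {1, …, N} such that for every mode a, the a-th diagonal 2×2 block of V has eigenvalues e^{−2r_{σ(a)}} and e^{2r_{σ(a)}}; i.e., V is a direct sum of one-mode covariance matrices of squeezed states with the input squeezing levels r₁, …, r_N in some order and orientation. -/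
open Matrix

noncomputable section

open Polynomial

noncomputable def Qp (t : ℝ) : Polynomial ℝ := X ^ 2 - C t * X + 1

lemma Qp_eval (t x : ℝ) : (Qp t).eval x = x ^ 2 - t * x + 1 := by
  simp [Qp]

lemma Qp_ne_zero (t : ℝ) : Qp t ≠ 0 := by
  intro h
  have := Qp_eval t 0
  rw [h] at this
  simp at this

lemma exists_root (t : ℝ) (ht : 4 ≤ t ^ 2) : ∃ x : ℝ, x ≠ 0 ∧ x ^ 2 - t * x + 1 = 0 := by
  refine ⟨(t + Real.sqrt (t ^ 2 - 4)) / 2, ?_, ?_⟩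
  · intro h0
    have hs : Real.sqrt (t ^ 2 - 4) ^ 2 = t ^ 2 - 4 := Real.sq_sqrt (by linarith)
    have h2 : Real.sqrt (t ^ 2 - 4) = -t := by linarith
    rw [h2] at hs
    nlinarith
  · have hs : Real.sqrt (t ^ 2 - 4) ^ 2 = t ^ 2 - 4 := Real.sq_sqrt (by linarith)
    nlinarith [hs]

lemma key_perm : ∀ (N : ℕ) (t c : Fin N → ℝ), (∀ a, 4 ≤ t a ^ 2) →
    (∏ a, Qp (t a)) = (∏ b, Qp (c b)) →
    ∃ σ : Equiv.Perm (Fin N), ∀ a, t a = c (σ a) := by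
  intro N
  induction N with
  | zero => intro t c _ _; exact ⟨Equiv.refl _, fun a => a.elim0⟩
  | succ n ih =>
    intro t c ht h
    obtain ⟨x, hx0, hxr⟩ := exists_root (t 0) (ht 0)
    -- find b with c b = t 0
    have hev : ∀ y : ℝ, (∏ a, (Qp (t a)).eval y) = ∏ b, (Qp (c b)).eval y := by
      intro y
      rw [← Polynomial.eval_prod, ← Polynomial.eval_prod, h]
    have h0 : (∏ b, (Qp (c b)).eval x) = 0 := by
      rw [← hev x]
      apply Finset.prod_eq_zero (Finset.mem_univ (0 : Fin (n+1)))
      rw [Qp_eval]; exact hxr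
    obtain ⟨b₀, -, hb₀⟩ := Finset.prod_eq_zero_iff.mp h0
    rw [Qp_eval] at hb₀
    have hcb : c b₀ = t 0 := by
      have : (c b₀ - t 0) * x = 0 := by linarith
      rcases mul_eq_zero.mp this with h | h
      · linarith
      · exact absurd h hx0
    -- cancel
    have hprod : Qp (t 0) * (∏ a : Fin n, Qp (t a.succ))
        = Qp (t 0) * (∏ b : Fin n, Qp (c (b₀.succAbove b))) := by
      rw [← Fin.prod_univ_succ (fun a => Qp (t a)), h,
        Fin.prod_univ_succAbove (fun b => Qp (c b)) b₀, hcb]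
    have hcancel := mul_left_cancel₀ (Qp_ne_zero (t 0)) hprod
    obtain ⟨σ', hσ'⟩ := ih (fun a => t a.succ) (fun b => c (b₀.succAbove b))
      (fun a => ht a.succ) hcancel
    -- build permutation
    set g : Fin (n+1) → Fin (n+1) := Fin.cases b₀ (fun a => b₀.succAbove (σ' a)) with hg
    have hginj : Function.Injective g := by
      intro u v huv
      induction u using Fin.cases with
      | zero =>
        induction v using Fin.cases with
        | zero => rfl
        | succ v => exact absurd huv.symm (Fin.succAbove_ne b₀ (σ' v))
      | succ u =>
        induction v using Fin.cases with
        | zero => exact absurd huv (Fin.succAbove_ne b₀ (σ' u))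
        | succ v =>
          simp only [hg, Fin.cases_succ] at huv
          have h1 := Fin.succAbove_right_injective (p := b₀) huv
          rw [σ'.injective h1]
    obtain ⟨σ, hσ⟩ : ∃ σ : Equiv.Perm (Fin (n+1)), ∀ a, σ a = g a :=
      ⟨Equiv.ofBijective g (Finite.injective_iff_bijective.mp hginj), fun a => rfl⟩
    refine ⟨σ, fun a => ?_⟩
    induction a using Fin.cases with
    | zero => rw [hσ]; simpa [hg] using hcb.symm
    | succ a => rw [hσ]; simpa [hg] using hσ' a


-- symplecticity of VIn
lemma VIn_symp {N : ℕ} (r : Fin N → ℝ) : VIn r * Omega N * VIn r = Omega N := by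
  ext ⟨a, i⟩ ⟨b, j⟩
  rw [Matrix.mul_apply]
  simp only [Matrix.diagonal_mul, VIn, Omega, Matrix.of_apply]
  rw [Finset.sum_eq_single (b, j)]
  · by_cases hab : a = b
    · subst hab
      simp only [Matrix.diagonal_apply_eq, if_pos rfl]
      fin_cases i <;> fin_cases j <;>
        simp [← Real.exp_add] 
    · simp [hab]
  · intro q _ hq
    simp [Matrix.diagonal_apply, hq]
  · simp

lemma VIn_transpose {N : ℕ} (r : Fin N → ℝ) : (VIn r)ᵀ = VIn r := by
  simp [VIn]

abbrev J2 : Matrix (Fin 2) (Fin 2) ℝ := !![(0 : ℝ), 1; -1, 0]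

lemma Omega_block {N : ℕ} :
    (Matrix.reindex (Equiv.prodComm (Fin N) (Fin 2)) (Equiv.prodComm (Fin N) (Fin 2))
      (Omega N)) = Matrix.blockDiagonal (fun _ : Fin N => J2) := by
  ext ⟨i, a⟩ ⟨j, b⟩
  simp only [Matrix.reindex_apply, Matrix.submatrix_apply, Equiv.prodComm_symm,
    Equiv.prodComm_apply, Prod.swap_prod_mk, Omega, Matrix.of_apply,
    Matrix.blockDiagonal_apply]

lemma decoupled_block {N : ℕ} (V : Matrix (Fin N × Fin 2) (Fin N × Fin 2) ℝ)
    (hdec : ∀ a b : Fin N, a ≠ b → ∀ i j : Fin 2, V (a, i) (b, j) = 0) :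
    (Matrix.reindex (Equiv.prodComm (Fin N) (Fin 2)) (Equiv.prodComm (Fin N) (Fin 2)) V)
      = Matrix.blockDiagonal (dblock V) := by
  ext ⟨i, a⟩ ⟨j, b⟩
  simp only [Matrix.reindex_apply, Matrix.submatrix_apply, Equiv.prodComm_symm,
    Equiv.prodComm_apply, Prod.swap_prod_mk, Matrix.blockDiagonal_apply]
  by_cases hab : a = b
  · subst hab; simp [dblock]
  · simp [hab, hdec a b hab i j]

lemma reindex_mul {N : ℕ} (A B : Matrix (Fin N × Fin 2) (Fin N × Fin 2) ℝ) :
    (Matrix.reindex (Equiv.prodComm (Fin N) (Fin 2)) (Equiv.prodComm (Fin N) (Fin 2)) A) *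
    (Matrix.reindex (Equiv.prodComm (Fin N) (Fin 2)) (Equiv.prodComm (Fin N) (Fin 2)) B)
    = Matrix.reindex (Equiv.prodComm (Fin N) (Fin 2)) (Equiv.prodComm (Fin N) (Fin 2)) (A * B) := by
  simp only [Matrix.reindex_apply]
  exact Matrix.submatrix_mul_equiv A B _ _ _

-- each block of a decoupled symplectic matrix satisfies D * J * D = J
lemma block_symp {N : ℕ} (V : Matrix (Fin N × Fin 2) (Fin N × Fin 2) ℝ)
    (hdec : ∀ a b : Fin N, a ≠ b → ∀ i j : Fin 2, V (a, i) (b, j) = 0)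
    (hsymp : V * Omega N * V = Omega N) (a : Fin N) :
    dblock V a * J2 * dblock V a = J2 := by
  have h : Matrix.blockDiagonal (fun b => dblock V b * J2 * dblock V b)
      = Matrix.blockDiagonal (fun _ : Fin N => J2) := by
    simp only [Matrix.blockDiagonal_mul]
    rw [← decoupled_block V hdec, ← Omega_block, reindex_mul, reindex_mul, hsymp]
  have h2 : ∀ i j : Fin 2,
      (dblock V a * J2 * dblock V a) i j = J2 i j := by
    intro i j
    have := congrFun (congrFun h (i, a)) (j, a)
    simpa [Matrix.blockDiagonal_apply] using this
  ext i j
  exact h2 i j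

lemma det_of_symp (D : Matrix (Fin 2) (Fin 2) ℝ) (h : D * J2 * D = J2) : D.det = 1 := by
  have e1 := congrFun (congrFun h 0) 0
  have e2 := congrFun (congrFun h 0) 1
  have e4 := congrFun (congrFun h 1) 1
  simp [Matrix.mul_apply, Fin.sum_univ_two] at e1 e2 e4
  have hps : D 0 0 * D 1 1 = 1 + D 0 1 * D 0 1 := by linarith
  have h1 : D 0 0 * (D 1 0 - D 0 1) = 0 := by linear_combination e1
  have h2 : (1 + D 0 1 * D 0 1) * (D 1 0 - D 0 1) = 0 := by
    linear_combination D 1 1 * h1 - (D 1 0 - D 0 1) * hps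
  have hq : D 1 0 = D 0 1 := by
    rcases mul_eq_zero.mp h2 with h' | h'
    · nlinarith [sq_nonneg (D 0 1)]
    · linarith
  rw [Matrix.det_fin_two, hq]
  linarith

lemma det_xsub_block (x : ℝ) (D : Matrix (Fin 2) (Fin 2) ℝ) :
    (x • (1 : Matrix (Fin 2) (Fin 2) ℝ) - D).det = x ^ 2 - D.trace * x + D.det := by
  rw [Matrix.det_fin_two, Matrix.trace_fin_two, Matrix.det_fin_two]
  simp [Matrix.sub_apply, Matrix.smul_apply, Matrix.one_apply]
  ring

lemma xsub_block {N : ℕ} (V : Matrix (Fin N × Fin 2) (Fin N × Fin 2) ℝ)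
    (hdec : ∀ a b : Fin N, a ≠ b → ∀ i j : Fin 2, V (a, i) (b, j) = 0) (x : ℝ) :
    (Matrix.reindex (Equiv.prodComm (Fin N) (Fin 2)) (Equiv.prodComm (Fin N) (Fin 2))
      (x • (1 : Matrix (Fin N × Fin 2) (Fin N × Fin 2) ℝ) - V))
      = Matrix.blockDiagonal (fun a => x • (1 : Matrix (Fin 2) (Fin 2) ℝ) - dblock V a) := by
  ext ⟨i, a⟩ ⟨j, b⟩
  simp only [Matrix.reindex_apply, Matrix.submatrix_apply, Equiv.prodComm_symm,
    Equiv.prodComm_apply, Prod.swap_prod_mk, Matrix.blockDiagonal_apply,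
    Matrix.sub_apply, Matrix.smul_apply, Matrix.one_apply]
  by_cases hab : a = b
  · subst hab
    simp [dblock, Prod.ext_iff]
  · simp [hab, Prod.ext_iff, hdec a b hab i j]

lemma det_xsub_VIn {N : ℕ} (r : Fin N → ℝ) (x : ℝ) :
    (x • (1 : Matrix (Fin N × Fin 2) (Fin N × Fin 2) ℝ) - VIn r).det
      = ∏ a : Fin N, (x ^ 2 - (Real.exp (-2 * r a) + Real.exp (2 * r a)) * x + 1) := by
  have hd : x • (1 : Matrix (Fin N × Fin 2) (Fin N × Fin 2) ℝ) - VIn r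
      = Matrix.diagonal (fun p => x - Real.exp ((if p.2 = 0 then (-2 : ℝ) else 2) * r p.1)) := by
    ext p q
    by_cases hpq : p = q
    · subst hpq
      simp [VIn, Matrix.one_apply, Matrix.diagonal_apply]
    · simp [VIn, Matrix.one_apply, Matrix.diagonal_apply, hpq]
  rw [hd, Matrix.det_diagonal, Fintype.prod_prod_type]
  refine Finset.prod_congr rfl fun a _ => ?_
  rw [Fin.prod_univ_two]
  have hm : Real.exp (-2 * r a) * Real.exp (2 * r a) = 1 := by
    rw [← Real.exp_add]
    norm_num
  simp only [show ((0 : Fin 2) = 0) = True by simp, if_true]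
  norm_num
  ring_nf
  ring_nf at hm
  linear_combination hm

lemma trace_sq_ge (D : Matrix (Fin 2) (Fin 2) ℝ) (hdet : D.det = 1) (hsym : D 1 0 = D 0 1) :
    4 ≤ D.trace ^ 2 := by
  rw [Matrix.det_fin_two, hsym] at hdet
  rw [Matrix.trace_fin_two]
  nlinarith [sq_nonneg (D 0 0 - D 1 1), sq_nonneg (D 0 1)]

lemma sum_sq_block (D : Matrix (Fin 2) (Fin 2) ℝ) (hsym : D 1 0 = D 0 1) (u v : ℝ)
    (htr : D.trace = u + v) (hdet : D.det = 1) (huv : u * v = 1) :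
    ∑ i : Fin 2, ∑ j : Fin 2, D i j ^ 2 = u ^ 2 + v ^ 2 := by
  rw [Matrix.trace_fin_two] at htr
  rw [Matrix.det_fin_two] at hdet
  simp only [Fin.sum_univ_two]
  linear_combination (D 0 0 + D 1 1 + u + v) * htr - 2 * hdet + 2 * huv
    + (D 1 0 - D 0 1) * hsym

lemma trace_VIn_sq {N : ℕ} (r : Fin N → ℝ) :
    Matrix.trace (VIn r * VIn r)
      = ∑ a : Fin N, (Real.exp (-2 * r a) ^ 2 + Real.exp (2 * r a) ^ 2) := by
  rw [show VIn r = Matrix.diagonal _ from rfl, Matrix.diagonal_mul_diagonal,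
    Matrix.trace_diagonal, Fintype.sum_prod_type]
  refine Finset.sum_congr rfl fun a _ => ?_
  rw [Fin.sum_univ_two]
  norm_num [sq]

/-- Proposition 1: for an orthogonal symplectic `K` and `V = K·V_in·Kᵀ`,
all off-diagonal 2×2 blocks of `V` vanish (`V` is decoupled) if and only if there is a
permutation `σ` of the modes such that for each mode `a`, the a-th diagonal 2×2 block of `V`
has eigenvalues `e^{−2r_{σ(a)}}` and `e^{2r_{σ(a)}}`. Since each diagonal block is a real
symmetric 2×2 matrix, having eigenvalues `e^{−2r}` and `e^{2r}` is expressed equivalently by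
its trace being `e^{−2r} + e^{2r}` and its determinant being `e^{−2r}·e^{2r} = 1`, i.e., `V` is
a direct sum of one-mode squeezed covariance matrices with the input squeezing levels in some
order and orientation. -/
theorem stmt_12 (N : ℕ) (K : Matrix (Fin N × Fin 2) (Fin N × Fin 2) ℝ)
    (hKorth : Kᵀ * K = 1) (hKsymp : K * Omega N * Kᵀ = Omega N)
    (r : Fin N → ℝ) (hr : ∀ a, 0 ≤ r a)
    (V : Matrix (Fin N × Fin 2) (Fin N × Fin 2) ℝ)
    (hVdef : V = K * VIn r * Kᵀ) :
    (∀ a b : Fin N, a ≠ b → ∀ i j : Fin 2, V (a, i) (b, j) = 0)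
      ↔ ∃ σ : Equiv.Perm (Fin N), ∀ a : Fin N,
          (dblock V a).trace = Real.exp (-2 * r (σ a)) + Real.exp (2 * r (σ a))
            ∧ (dblock V a).det = 1 := by
  have hKKT : K * Kᵀ = 1 := mul_eq_one_comm.mp hKorth
  have hVsym : Vᵀ = V := by
    rw [hVdef, Matrix.transpose_mul, Matrix.transpose_mul, Matrix.transpose_transpose,
      VIn_transpose, Matrix.mul_assoc]
  have hsymblk : ∀ a : Fin N, (dblock V a) 1 0 = (dblock V a) 0 1 := by
    intro a
    show V (a, 1) (a, 0) = V (a, 0) (a, 1)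
    rw [show V (a, 1) (a, 0) = Vᵀ (a, 0) (a, 1) from rfl, hVsym]
  constructor
  · -- forward direction
    intro hdec
    have hKOK : Kᵀ * Omega N * K = Omega N := by
      have h2 : Kᵀ * (K * Omega N * Kᵀ) * K = Omega N := by
        simp only [← Matrix.mul_assoc]
        rw [hKorth, Matrix.one_mul, Matrix.mul_assoc, hKorth, Matrix.mul_one]
      rw [hKsymp] at h2
      exact h2
    have hsymp : V * Omega N * V = Omega N := by
      rw [hVdef]
      have h3 : K * VIn r * Kᵀ * Omega N * (K * VIn r * Kᵀ)
          = K * (VIn r * (Kᵀ * Omega N * K) * VIn r) * Kᵀ := by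
        simp only [Matrix.mul_assoc]
      rw [h3, hKOK, VIn_symp, hKsymp]
    have hdet : ∀ a, (dblock V a).det = 1 :=
      fun a => det_of_symp _ (block_symp V hdec hsymp a)
    have htr2 : ∀ a, 4 ≤ (dblock V a).trace ^ 2 :=
      fun a => trace_sq_ge _ (hdet a) (hsymblk a)
    have hpoly : (∏ a, Qp ((dblock V a).trace))
        = ∏ b, Qp (Real.exp (-2 * r b) + Real.exp (2 * r b)) := by
      apply Polynomial.funext
      intro x
      rw [Polynomial.eval_prod, Polynomial.eval_prod]
      simp only [Qp_eval]
      calc (∏ a, (x ^ 2 - (dblock V a).trace * x + 1))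
          = ∏ a, (x • (1 : Matrix (Fin 2) (Fin 2) ℝ) - dblock V a).det := by
            refine Finset.prod_congr rfl fun a _ => ?_
            rw [det_xsub_block, hdet a]
        _ = (Matrix.blockDiagonal fun a => x • (1 : Matrix (Fin 2) (Fin 2) ℝ)
              - dblock V a).det := (Matrix.det_blockDiagonal _).symm
        _ = (x • (1 : Matrix (Fin N × Fin 2) (Fin N × Fin 2) ℝ) - V).det := by
            rw [← xsub_block V hdec x, Matrix.det_reindex_self]
        _ = (x • (1 : Matrix (Fin N × Fin 2) (Fin N × Fin 2) ℝ) - VIn r).det := by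
            have he : x • (1 : Matrix (Fin N × Fin 2) (Fin N × Fin 2) ℝ) - V
                = K * (x • (1 : Matrix (Fin N × Fin 2) (Fin N × Fin 2) ℝ) - VIn r) * Kᵀ := by
              rw [hVdef, Matrix.mul_sub, Matrix.sub_mul, Matrix.mul_smul, Matrix.mul_one,
                Matrix.smul_mul, hKKT]
            rw [he, Matrix.det_mul, Matrix.det_mul]
            have hd1 : K.det * Kᵀ.det = 1 := by
              rw [← Matrix.det_mul, hKKT, Matrix.det_one]
            linear_combination
              ((x • (1 : Matrix (Fin N × Fin 2) (Fin N × Fin 2) ℝ) - VIn r).det) * hd1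
        _ = ∏ b, (x ^ 2 - (Real.exp (-2 * r b) + Real.exp (2 * r b)) * x + 1) :=
            det_xsub_VIn r x
    obtain ⟨σ, hσ⟩ := key_perm N (fun a => (dblock V a).trace)
      (fun b => Real.exp (-2 * r b) + Real.exp (2 * r b)) htr2 hpoly
    exact ⟨σ, fun a => ⟨hσ a, hdet a⟩⟩
  · -- backward direction
    rintro ⟨σ, hσ⟩ a b hab i j
    have hT1 : Matrix.trace (V * V) = ∑ p : Fin N × Fin 2, ∑ q : Fin N × Fin 2, V p q ^ 2 := by
      rw [Matrix.trace]
      simp only [Matrix.diag, Matrix.mul_apply]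
      refine Finset.sum_congr rfl fun p _ => Finset.sum_congr rfl fun q _ => ?_
      have hqp : V q p = V p q := by
        rw [show V q p = Vᵀ p q from rfl, hVsym]
      rw [hqp, sq]
    have hT2 : Matrix.trace (V * V)
        = ∑ a : Fin N, (Real.exp (-2 * r a) ^ 2 + Real.exp (2 * r a) ^ 2) := by
      rw [hVdef]
      have h1 : Kᵀ * (K * (VIn r * Kᵀ)) = VIn r * Kᵀ := by
        rw [← Matrix.mul_assoc, hKorth, Matrix.one_mul]
      have h2 : K * VIn r * Kᵀ * (K * VIn r * Kᵀ) = K * (VIn r * VIn r * Kᵀ) := by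
        simp only [Matrix.mul_assoc]
        rw [h1]
      rw [h2, Matrix.trace_mul_comm, Matrix.mul_assoc, hKorth, Matrix.mul_one, trace_VIn_sq]
    have hDiag : ∑ a : Fin N, ∑ i : Fin 2, ∑ j : Fin 2, V (a, i) (a, j) ^ 2
        = ∑ a : Fin N, (Real.exp (-2 * r a) ^ 2 + Real.exp (2 * r a) ^ 2) := by
      rw [← Equiv.sum_comp σ
        (fun b => Real.exp (-2 * r b) ^ 2 + Real.exp (2 * r b) ^ 2)]
      refine Finset.sum_congr rfl fun a _ => ?_
      have hm : Real.exp (-2 * r (σ a)) * Real.exp (2 * r (σ a)) = 1 := by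
        rw [← Real.exp_add]
        norm_num
      exact sum_sq_block (dblock V a) (hsymblk a) _ _ (hσ a).1 (hσ a).2 hm
    have hsplit1 : ∑ p : Fin N × Fin 2, ∑ q : Fin N × Fin 2,
        (if p.1 = q.1 then V p q ^ 2 else 0)
        = ∑ a : Fin N, ∑ i : Fin 2, ∑ j : Fin 2, V (a, i) (a, j) ^ 2 := by
      rw [Fintype.sum_prod_type]
      refine Finset.sum_congr rfl fun a _ => Finset.sum_congr rfl fun i _ => ?_
      rw [Fintype.sum_prod_type]
      have h3 : ∀ b : Fin N, (∑ j : Fin 2, if a = b then V (a, i) (b, j) ^ 2 else 0)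
          = if a = b then ∑ j : Fin 2, V (a, i) (b, j) ^ 2 else 0 := by
        intro b
        split_ifs <;> simp
      simp only [h3]
      rw [Finset.sum_ite_eq]
      simp
    have hsplit : ∑ p : Fin N × Fin 2, ∑ q : Fin N × Fin 2, V p q ^ 2
        = (∑ p : Fin N × Fin 2, ∑ q : Fin N × Fin 2, (if p.1 = q.1 then V p q ^ 2 else 0))
          + ∑ p : Fin N × Fin 2, ∑ q : Fin N × Fin 2, (if p.1 = q.1 then 0 else V p q ^ 2) := by
      rw [← Finset.sum_add_distrib]
      refine Finset.sum_congr rfl fun p _ => ?_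
      rw [← Finset.sum_add_distrib]
      refine Finset.sum_congr rfl fun q _ => ?_
      split_ifs <;> ring
    have hoff : ∑ p : Fin N × Fin 2, ∑ q : Fin N × Fin 2,
        (if p.1 = q.1 then 0 else V p q ^ 2) = 0 := by
      have := hT1
      rw [hT2] at this
      rw [hsplit, hsplit1, hDiag] at this
      linarith
    have hnn : ∀ p q : Fin N × Fin 2, 0 ≤ (if p.1 = q.1 then (0 : ℝ) else V p q ^ 2) := by
      intro p q
      split_ifs
      · exact le_rfl
      · positivity
    have hz : ∀ p ∈ Finset.univ, ∀ q ∈ (Finset.univ : Finset (Fin N × Fin 2)),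
        (if p.1 = q.1 then (0:ℝ) else V p q ^ 2) = 0 := by
      intro p _
      have h4 := (Finset.sum_eq_zero_iff_of_nonneg
        (fun p _ => Finset.sum_nonneg fun q _ => hnn p q)).mp hoff p (Finset.mem_univ p)
      intro q hq
      exact (Finset.sum_eq_zero_iff_of_nonneg (fun q _ => hnn p q)).mp h4 q hq
    have h5 := hz (a, i) (Finset.mem_univ _) (b, j) (Finset.mem_univ _)
    rw [if_neg hab] at h5
    exact pow_eq_zero_iff (by norm_num) |>.mp h5
end
end

section
/- (Theorem 1, optimal value) Let r₁ ≥ r₂ ≥ … ≥ r_N ≥ 0, V_in = diag(e^{−2r₁}, e^{2r₁}, …, e^{−2r_N}, e^{2r_N}), let g₁, …, g_N be real with g₁² ≥ g₂² ≥ … ≥ g_N², and G = diag(g₁, g₁, …, g_N, g_N). Then the supremum over all real 2N×2N orthogonal symplectic matrices K of the QFI H(K) := (Tr((K·V_in·Kᵀ·G)²) − Tr(G²))/2 is attained (in particular at K = I) and equals 2·∑_{a=1}^{N} g_a²·sinh²(2r_a). That is, for every such K, H(K) ≤ 2·∑_{a=1}^{N} g_a²·sinh²(2r_a), with equality for K =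 I. -/
open Matrix

noncomputable section

lemma trace_sq_nonneg' {n : Type*} [Fintype n] (C : Matrix n n ℝ) :
    0 ≤ Matrix.trace (Cᵀ * C) := by
  simp only [Matrix.trace, Matrix.diag_apply, Matrix.mul_apply, Matrix.transpose_apply]
  exact Finset.sum_nonneg fun j _ => Finset.sum_nonneg fun i _ => mul_self_nonneg _

lemma trace_ineq' {n : Type*} [Fintype n] [DecidableEq n] (A B : Matrix n n ℝ)
    (hA : Aᵀ = A) (hB : Bᵀ = B) :
    Matrix.trace ((A * B) ^ 2) ≤ Matrix.trace (A * A * (B * B)) := by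
  have h := trace_sq_nonneg' (A * B - B * A)
  have ht : (A * B - B * A)ᵀ = B * A - A * B := by
    simp [Matrix.transpose_sub, Matrix.transpose_mul, hA, hB]
  rw [ht] at h
  have hexp : (B * A - A * B) * (A * B - B * A)
      = B * (A * (A * B)) - B * (A * (B * A)) - A * (B * (A * B)) + A * (B * (B * A)) := by
    noncomm_ring
  rw [hexp] at h
  simp only [Matrix.trace_add, Matrix.trace_sub] at h
  have c1 : Matrix.trace (B * (A * (A * B))) = Matrix.trace (A * A * (B * B)) := by
    rw [Matrix.trace_mul_comm]; congr 1; noncomm_ring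
  have c2 : Matrix.trace (A * (B * (B * A))) = Matrix.trace (A * A * (B * B)) := by
    rw [Matrix.trace_mul_comm, show B * (B * A) * A = B * B * (A * A) by noncomm_ring,
      Matrix.trace_mul_comm]
  have c3 : Matrix.trace (B * (A * (B * A))) = Matrix.trace ((A * B) ^ 2) := by
    rw [Matrix.trace_mul_comm]; congr 1; noncomm_ring
  have c4 : Matrix.trace (A * (B * (A * B))) = Matrix.trace ((A * B) ^ 2) := by
    congr 1; noncomm_ring
  linarith [h, c1, c2, c3, c4]

lemma trace_KDKtD' {m : Type*} [Fintype m] [DecidableEq m]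
    (K : Matrix m m ℝ) (u w : m → ℝ) :
    Matrix.trace (K * Matrix.diagonal u * Kᵀ * Matrix.diagonal w)
      = ∑ p, ∑ q, w p * (K p q) ^ 2 * u q := by
  simp only [Matrix.trace, Matrix.diag_apply, Matrix.mul_apply, Matrix.transpose_apply,
    Matrix.diagonal_apply, Finset.sum_ite_eq, Finset.mem_univ, if_true,
    mul_ite, mul_zero, ite_mul, zero_mul, Finset.sum_ite_eq', Finset.sum_mul, Finset.mul_sum]
  refine Finset.sum_congr rfl fun p _ => Finset.sum_congr rfl fun q _ => by ring

open Finset in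
lemma ds_bound' {N : ℕ} (S : Matrix (Fin N) (Fin N) ℝ)
    (hS : S ∈ doublyStochastic ℝ (Fin N)) (u v : Fin N → ℝ)
    (hu : Antitone u) (hv : Antitone v) :
    ∑ a, ∑ b, u a * S a b * v b ≤ ∑ a, u a * v a := by
  have hmono : Monovary u v := by
    intro i j hij
    have hji : j ≤ i := by
      by_contra hc
      exact absurd (hv (le_of_not_ge hc)) (not_le.2 hij)
    exact hu hji
  obtain ⟨ws, hw0, hw1, hwS⟩ := exists_eq_sum_perm_of_mem_doublyStochastic hS
  have hSab : ∀ a b, S a b = ∑ σ : Equiv.Perm (Fin N), ws σ * (σ.permMatrix ℝ) a b := by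
    intro a b
    rw [← hwS]
    simp [Matrix.sum_apply]
  have key : ∀ σ : Equiv.Perm (Fin N),
      (∑ a, ∑ b, ws σ * (u a * (σ.permMatrix ℝ) a b * v b)) = ws σ * ∑ a, u a * v (σ a) := by
    intro σ
    rw [Finset.mul_sum]
    refine Finset.sum_congr rfl fun a _ => ?_
    rw [← Finset.mul_sum]
    congr 1
    simp [Equiv.Perm.permMatrix, PEquiv.toMatrix_apply, Equiv.toPEquiv_apply,
      mul_ite, ite_mul, mul_zero, zero_mul, mul_one, Finset.sum_ite_eq, Finset.mem_univ]
  calc ∑ a, ∑ b, u a * S a b * v b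
      = ∑ a, ∑ b, ∑ σ : Equiv.Perm (Fin N), ws σ * (u a * (σ.permMatrix ℝ) a b * v b) := by
        refine Finset.sum_congr rfl fun a _ => Finset.sum_congr rfl fun b _ => ?_
        rw [hSab a b, Finset.mul_sum, Finset.sum_mul]
        exact Finset.sum_congr rfl fun σ _ => by ring
    _ = ∑ σ : Equiv.Perm (Fin N), ∑ a, ∑ b, ws σ * (u a * (σ.permMatrix ℝ) a b * v b) :=
        (Finset.sum_congr rfl fun a _ => Finset.sum_comm).trans Finset.sum_comm
    _ = ∑ σ : Equiv.Perm (Fin N), ws σ * ∑ a, u a * v (σ a) :=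
        Finset.sum_congr rfl fun σ _ => key σ
    _ ≤ ∑ σ : Equiv.Perm (Fin N), ws σ * ∑ a, u a * v a :=
        Finset.sum_le_sum fun σ _ =>
          mul_le_mul_of_nonneg_left (hmono.sum_mul_comp_perm_le_sum_mul) (hw0 σ)
    _ = ∑ a, u a * v a := by rw [← Finset.sum_mul, hw1, one_mul]

lemma per_term1' (g t : ℝ) :
    (Real.exp ((-2)*t) * g * (Real.exp ((-2)*t) * g) + Real.exp (2*t) * g * (Real.exp (2*t) * g)
      - (g * g + g * g)) / 2 = 2 * (g ^ 2 * Real.sinh (2*t) ^ 2) := by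
  rw [Real.sinh_eq, show (-2 : ℝ)*t = -(2*t) by ring, Real.exp_neg]
  have h := Real.exp_ne_zero (2*t)
  field_simp
  ring

lemma per_term2' (g t : ℝ) :
    (g ^ 2 * (Real.exp ((-2)*t) ^ 2 + Real.exp (2*t) ^ 2) - (g ^ 2 + g ^ 2)) / 2
      = 2 * (g ^ 2 * Real.sinh (2*t) ^ 2) := by
  rw [Real.sinh_eq, show (-2 : ℝ)*t = -(2*t) by ring, Real.exp_neg]
  have h := Real.exp_ne_zero (2*t)
  field_simp
  ring

lemma v_antitone' {N : ℕ} (r : Fin N → ℝ) (hr0 : ∀ a, 0 ≤ r a) (hr : Antitone r) :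
    Antitone fun b => Real.exp ((-2) * r b) ^ 2 + Real.exp (2 * r b) ^ 2 := by
  intro b b' h
  simp only
  set x := r b with hx
  set y := r b' with hy
  have hyx : y ≤ x := hr h
  have hy0 : 0 ≤ y := hr0 b'
  have ha : Real.exp (2*y) ≤ Real.exp (2*x) := Real.exp_le_exp.2 (by linarith)
  have hb : 1 ≤ Real.exp (2*y) := Real.one_le_exp (by linarith)
  have hc : Real.exp ((-2)*x) ≤ Real.exp ((-2)*y) := Real.exp_le_exp.2 (by linarith)
  have hd : Real.exp ((-2)*y) ≤ 1 := Real.exp_le_one_iff.2 (by linarith)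
  have hxx : Real.exp (2*x) * Real.exp ((-2)*x) = 1 := by
    rw [← Real.exp_add]; norm_num
  have hyy : Real.exp (2*y) * Real.exp ((-2)*y) = 1 := by
    rw [← Real.exp_add]; norm_num
  have hc0 : 0 < Real.exp ((-2)*x) := Real.exp_pos _
  have hd0 : 0 < Real.exp ((-2)*y) := Real.exp_pos _
  nlinarith [mul_nonneg (sub_nonneg.2 ha) (sub_nonneg.2 hc),
    mul_nonneg (sub_nonneg.2 ha) (sub_nonneg.2 hd),
    mul_nonneg (sub_nonneg.2 hc) (sub_nonneg.2 hd),
    sq_nonneg (Real.exp (2*x) - Real.exp (2*y)),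
    sq_nonneg (Real.exp ((-2)*y) - Real.exp ((-2)*x))]

/-- Theorem 1, optimal value: with squeezing levels `r₁ ≥ … ≥ r_N ≥ 0` and
coefficients with `g₁² ≥ … ≥ g_N²`, for every orthogonal symplectic `K` the QFI satisfies
`H(K) = (Tr((K·V_in·Kᵀ·G)²) − Tr(G²))/2 ≤ 2·∑_a g_a²·sinh²(2r_a)`, and the supremum is
attained at `K = I`. -/
theorem stmt_13 (N : ℕ) (r : Fin N → ℝ) (hr0 : ∀ a, 0 ≤ r a) (hr : Antitone r)
    (g : Fin N → ℝ) (hg : Antitone fun a => (g a) ^ 2) :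
    (∀ K : Matrix (Fin N × Fin 2) (Fin N × Fin 2) ℝ,
        Kᵀ * K = 1 → K * Omega N * Kᵀ = Omega N →
          qfi (K * VIn r * Kᵀ) (Gmat g)
            ≤ 2 * ∑ a : Fin N, (g a) ^ 2 * Real.sinh (2 * r a) ^ 2)
      ∧ qfi ((1 : Matrix (Fin N × Fin 2) (Fin N × Fin 2) ℝ) * VIn r
              * (1 : Matrix (Fin N × Fin 2) (Fin N × Fin 2) ℝ)ᵀ) (Gmat g)
          = 2 * ∑ a : Fin N, (g a) ^ 2 * Real.sinh (2 * r a) ^ 2 := by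
  constructor
  · -- the bound
    intro K hK hKsymp
    have hK' : K * Kᵀ = 1 := mul_eq_one_comm.mp hK
    have hcomm : K * Omega N = Omega N * K := by
      calc K * Omega N = K * Omega N * (Kᵀ * K) := by rw [hK, Matrix.mul_one]
        _ = (K * Omega N * Kᵀ) * K := by rw [Matrix.mul_assoc (K * Omega N)]
        _ = Omega N * K := by rw [hKsymp]
    have hrel1 : ∀ a b : Fin N, K (a,1) (b,1) = K (a,0) (b,0) := by
      intro a b
      have h1 := congrFun (congrFun hcomm (a, 0)) (b, 1)
      simp [Matrix.mul_apply, Omega, Fintype.sum_prod_type, Fin.sum_univ_two,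
        Finset.sum_ite_eq] at h1
      linarith [h1]
    have hrel2 : ∀ a b : Fin N, K (a,1) (b,0) = - K (a,0) (b,1) := by
      intro a b
      have h2 := congrFun (congrFun hcomm (a, 1)) (b, 1)
      simp [Matrix.mul_apply, Omega, Fintype.sum_prod_type, Fin.sum_univ_two,
        Finset.sum_ite_eq] at h2
      linarith [h2]
    -- the doubly stochastic matrix of squared block norms
    set S : Matrix (Fin N) (Fin N) ℝ :=
      Matrix.of fun a b => K (a,0) (b,0) ^ 2 + K (a,0) (b,1) ^ 2 with hSdef
    have hSapp : ∀ a b, S a b = K (a,0) (b,0) ^ 2 + K (a,0) (b,1) ^ 2 := fun a b => rfl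
    have hrow : ∀ a, ∑ b, S a b = 1 := by
      intro a
      have h := congrFun (congrFun hK' (a, 0)) (a, 0)
      simp [Matrix.mul_apply, Matrix.one_apply, Fintype.sum_prod_type,
        Fin.sum_univ_two] at h
      calc ∑ b, S a b = ∑ b, (K (a,0) (b,0) * K (a,0) (b,0) + K (a,0) (b,1) * K (a,0) (b,1)) := by
            refine Finset.sum_congr rfl fun b _ => ?_
            rw [hSapp]; ring
        _ = 1 := h
    have hcol : ∀ b, ∑ a, S a b = 1 := by
      intro b
      have h := congrFun (congrFun hK (b, 0)) (b, 0)
      simp [Matrix.mul_apply, Matrix.one_apply, Fintype.sum_prod_type,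
        Fin.sum_univ_two] at h
      calc ∑ a, S a b = ∑ a, (K (a,0) (b,0) * K (a,0) (b,0) + K (a,1) (b,0) * K (a,1) (b,0)) := by
            refine Finset.sum_congr rfl fun a _ => ?_
            rw [hSapp, hrel2]; ring
        _ = 1 := h
    have hS : S ∈ doublyStochastic ℝ (Fin N) := by
      rw [mem_doublyStochastic_iff_sum]
      exact ⟨fun a b => by rw [hSapp]; positivity, hrow, hcol⟩
    -- symmetry facts
    set W := K * VIn r * Kᵀ with hWdef
    have hVsym : (VIn r)ᵀ = VIn r := Matrix.diagonal_transpose _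
    have hGsym : (Gmat g)ᵀ = Gmat g := Matrix.diagonal_transpose _
    have hWsym : Wᵀ = W := by
      rw [hWdef]
      simp [Matrix.transpose_mul, hVsym, Matrix.mul_assoc]
    -- step 1: trace((WG)²) ≤ trace(W²G²)
    have step1 := trace_ineq' W (Gmat g) hWsym hGsym
    -- W * W = K * diagonal d2 * Kᵀ
    have hWW : W * W = K * Matrix.diagonal
        (fun p : Fin N × Fin 2 => Real.exp ((if p.2 = 0 then (-2:ℝ) else 2) * r p.1)
          * Real.exp ((if p.2 = 0 then (-2:ℝ) else 2) * r p.1)) * Kᵀ := by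
      rw [hWdef]
      calc K * VIn r * Kᵀ * (K * VIn r * Kᵀ)
          = K * (VIn r * ((Kᵀ * K) * (VIn r * Kᵀ))) := by
            simp only [Matrix.mul_assoc]
        _ = K * (VIn r * VIn r) * Kᵀ := by rw [hK]; simp only [Matrix.one_mul, Matrix.mul_assoc]
        _ = _ := by
            rw [VIn, Matrix.diagonal_mul_diagonal]
    have hGG : Gmat g * Gmat g = Matrix.diagonal (fun p : Fin N × Fin 2 => g p.1 * g p.1) := by
      rw [Gmat, Matrix.diagonal_mul_diagonal]
    -- step 2: trace(W²G²) as a double sum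
    have step2 : Matrix.trace (W * W * (Gmat g * Gmat g))
        = ∑ a, ∑ b, (g a) ^ 2 * S a b
            * (Real.exp ((-2) * r b) ^ 2 + Real.exp (2 * r b) ^ 2) := by
      rw [hWW, hGG, trace_KDKtD']
      simp only [Fintype.sum_prod_type]
      refine Finset.sum_congr rfl fun a _ => ?_
      rw [Finset.sum_comm]
      refine Finset.sum_congr rfl fun b _ => ?_
      simp only [Fin.sum_univ_two]
      norm_num
      rw [hSapp, hrel1 a b, hrel2 a b]
      ring
    have hv := v_antitone' r hr0 hr
    have step3 := ds_bound' S hS (fun a => g a ^ 2) _ hg hv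
    have traceG2 : Matrix.trace ((Gmat g) ^ 2) = ∑ a, (g a ^ 2 + g a ^ 2) := by
      rw [sq, hGG, Matrix.trace_diagonal, Fintype.sum_prod_type]
      simp only [Fin.sum_univ_two]
      exact Finset.sum_congr rfl fun a _ => by ring
    rw [qfi, traceG2]
    have hB : ((∑ a, g a ^ 2 * (Real.exp ((-2) * r a) ^ 2 + Real.exp (2 * r a) ^ 2))
        - ∑ a, (g a ^ 2 + g a ^ 2)) / 2 = 2 * ∑ a : Fin N, (g a) ^ 2 * Real.sinh (2 * r a) ^ 2 := by
      rw [← Finset.sum_sub_distrib, Finset.sum_div, Finset.mul_sum]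
      exact Finset.sum_congr rfl fun a _ => per_term2' (g a) (r a)
    have hT : Matrix.trace ((W * Gmat g) ^ 2)
        ≤ ∑ a, g a ^ 2 * (Real.exp ((-2) * r a) ^ 2 + Real.exp (2 * r a) ^ 2) := by
      refine step1.trans ?_
      rw [step2]
      exact step3
    linarith [hT, hB]
  · -- equality at K = 1
    rw [Matrix.transpose_one, Matrix.one_mul, Matrix.mul_one]
    rw [qfi, VIn, Gmat, sq, Matrix.diagonal_mul_diagonal, Matrix.diagonal_mul_diagonal,
      sq, Matrix.diagonal_mul_diagonal, Matrix.trace_diagonal, Matrix.trace_diagonal]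
    rw [Fintype.sum_prod_type, Fintype.sum_prod_type]
    simp only [Fin.sum_univ_two]
    rw [← Finset.sum_sub_distrib, Finset.sum_div, Finset.mul_sum]
    refine Finset.sum_congr rfl fun a _ => ?_
    simpa using per_term1' (g a) (r a)
end
end

section
/- (Corollary, Eq. 14) Let r ≥ 0 and r₁, …, r_N with 0 ≤ r_a ≤ r for all a, V_in = diag(e^{−2r₁}, e^{2r₁}, …, e^{−2r_N}, e^{2r_N}), g₁, …, g_N real, and G = diag(g₁, g₁, …, g_N, g_N). Then for every real 2N×2N orthogonal symplectic matrix K, the QFI satisfies (Tr((K·V_in·Kᵀ·G)²) − Tr(G²))/2 ≤ ‖G‖²·sinh²(2r), where ‖G‖² = 2·∑_{a=1}^{N} g_a² is the squared Frobenius norm of G. -/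
open Matrix

noncomputable section

section Aux

variable {N : ℕ}

lemma trace_sq_comm (M P : Matrix (Fin N × Fin 2) (Fin N × Fin 2) ℝ) :
    Matrix.trace ((M * P) ^ 2) = Matrix.trace ((P * M) ^ 2) := by
  have h1 : (M * P) * (M * P) = M * (P * M * P) := by noncomm_ring
  have h2 : (P * M * P) * M = (P * M) * (P * M) := by noncomm_ring
  rw [pow_two, pow_two, h1, Matrix.trace_mul_comm, h2]

lemma omega_mul_G (g : Fin N → ℝ) : Omega N * Gmat g = Gmat g * Omega N := by
  ext p q
  by_cases h : p.1 = q.1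
  · simp [Omega, Gmat, Matrix.mul_diagonal, Matrix.diagonal_mul, h, mul_comm]
  · simp [Omega, Gmat, Matrix.mul_diagonal, Matrix.diagonal_mul, h]

lemma omega_mul_omega : Omega N * Omega N = -1 := by
  ext p q
  obtain ⟨a, i⟩ := p
  obtain ⟨b, j⟩ := q
  rw [Matrix.mul_apply]
  rw [Fintype.sum_prod_type]
  rcases eq_or_ne a b with hab | hab
  · subst hab
    rw [Finset.sum_eq_single a]
    · fin_cases i <;> fin_cases j <;>
        simp [Omega, Fin.sum_univ_two, Prod.ext_iff]
    · intro c _ hc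
      have : ¬ (a = c) := fun h => hc h.symm
      simp [Omega, this]
    · simp
  · have hr : ((-1 : Matrix (Fin N × Fin 2) (Fin N × Fin 2) ℝ)) (a, i) (b, j) = 0 := by
      simp [Matrix.one_apply, Prod.ext_iff, hab]
    rw [hr]
    apply Finset.sum_eq_zero
    intro c _
    rcases eq_or_ne a c with h | h
    · subst h
      simp [Omega, hab]
    · simp [Omega, h]

lemma vin_omega_vin (rs : Fin N → ℝ) : VIn rs * Omega N * VIn rs = Omega N := by
  ext p q
  obtain ⟨a, i⟩ := p
  obtain ⟨b, j⟩ := q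
  simp only [VIn, Matrix.mul_diagonal, Matrix.diagonal_mul]
  rcases eq_or_ne a b with hab | hab
  · subst hab
    fin_cases i <;> fin_cases j <;>
      simp [Omega] <;>
      rw [← Real.exp_add] <;> norm_num
  · simp [Omega, hab]

end Aux

/-- Corollary, Eq. 14: if all squeezing levels satisfy `0 ≤ r_a ≤ r`, then for
every orthogonal symplectic `K` the QFI is bounded as
`(Tr((K·V_in·Kᵀ·G)²) − Tr(G²))/2 ≤ ‖G‖²·sinh²(2r)`, where `‖G‖² = 2·∑_a g_a²` is the squared
Frobenius norm of `G = diag(g₁, g₁, …, g_N, g_N)`. -/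
theorem stmt_15 (N : ℕ) (r : ℝ) (hr : 0 ≤ r) (rs : Fin N → ℝ)
    (hrs : ∀ a, 0 ≤ rs a ∧ rs a ≤ r) (g : Fin N → ℝ)
    (K : Matrix (Fin N × Fin 2) (Fin N × Fin 2) ℝ)
    (hKorth : Kᵀ * K = 1) (hKsymp : K * Omega N * Kᵀ = Omega N) :
    qfi (K * VIn rs * Kᵀ) (Gmat g)
      ≤ (2 * ∑ a : Fin N, (g a) ^ 2) * Real.sinh (2 * r) ^ 2 := by
  classical
  set G : Matrix (Fin N × Fin 2) (Fin N × Fin 2) ℝ := Gmat g with hGdef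
  set V : Matrix (Fin N × Fin 2) (Fin N × Fin 2) ℝ := K * VIn rs * Kᵀ with hVdef
  set Vi : Matrix (Fin N × Fin 2) (Fin N × Fin 2) ℝ := K * VIn (fun a => - rs a) * Kᵀ
    with hVidef
  set A : Matrix (Fin N × Fin 2) (Fin N × Fin 2) ℝ := Kᵀ * G * K with hAdef
  have hKK : K * Kᵀ = 1 := mul_eq_one_comm.mp hKorth
  have hKOK : Kᵀ * Omega N * K = Omega N := by
    have h1 : Kᵀ * (K * Omega N * Kᵀ) * K = Kᵀ * Omega N * K := by rw [hKsymp]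
    have h2 : Kᵀ * (K * Omega N * Kᵀ) * K = (Kᵀ * K) * Omega N * (Kᵀ * K) := by
      noncomm_ring
    rw [h1.symm.trans h2, hKorth, one_mul, mul_one]
  -- products of the two diagonal matrices
  have hDmD : VIn (fun a => - rs a) * VIn rs = 1 := by
    rw [VIn, VIn, Matrix.diagonal_mul_diagonal]
    have hfun : (fun p : Fin N × Fin 2 =>
        Real.exp ((if p.2 = 0 then (-2 : ℝ) else 2) * (- rs p.1))
          * Real.exp ((if p.2 = 0 then (-2 : ℝ) else 2) * rs p.1)) = fun _ => (1 : ℝ) := by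
      funext p
      rw [← Real.exp_add]
      have : (if p.2 = 0 then (-2 : ℝ) else 2) * (- rs p.1) +
          (if p.2 = 0 then (-2 : ℝ) else 2) * rs p.1 = 0 := by ring
      rw [this, Real.exp_zero]
    rw [hfun, Matrix.diagonal_one]
  -- inverse relation
  have hViV : Vi * V = 1 := by
    have h1 : Vi * V = K * (VIn (fun a => - rs a) * (Kᵀ * K) * VIn rs) * Kᵀ := by
      rw [hVidef, hVdef]; noncomm_ring
    rw [h1, hKorth, mul_one, hDmD, mul_one, hKK]
  have hVOV : V * Omega N * V = Omega N := by
    have h1 : V * Omega N * V = K * (VIn rs * (Kᵀ * Omega N * K) * VIn rs) * Kᵀ := by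
      rw [hVdef]; noncomm_ring
    rw [h1, hKOK, vin_omega_vin, hKsymp]
  have hVi : Vi = -(Omega N * V * Omega N) := by
    have h1 : V * (-(Omega N * V * Omega N)) = 1 := by
      have : V * (-(Omega N * V * Omega N)) = -((V * Omega N * V) * Omega N) := by
        noncomm_ring
      rw [this, hVOV, omega_mul_omega]
      simp
    calc Vi = Vi * (V * (-(Omega N * V * Omega N))) := by rw [h1, mul_one]
      _ = (Vi * V) * (-(Omega N * V * Omega N)) := by noncomm_ring
      _ = -(Omega N * V * Omega N) := by rw [hViV, one_mul]
  -- trace symmetry under V ↦ V⁻¹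
  have htrace_eq : Matrix.trace ((Vi * G) ^ 2) = Matrix.trace ((V * G) ^ 2) := by
    rw [hVi]
    have h0 : (-(Omega N * V * Omega N)) * G = -(Omega N * (V * Omega N * G)) := by
      noncomm_ring
    rw [h0, neg_sq, trace_sq_comm]
    have h2 : (V * Omega N * G) * Omega N = -(V * G) := by
      have hOGO : Omega N * G * Omega N = -G := by
        rw [hGdef, omega_mul_G, mul_assoc, omega_mul_omega]
        simp
      calc (V * Omega N * G) * Omega N = V * (Omega N * G * Omega N) := by noncomm_ring
        _ = -(V * G) := by rw [hOGO]; noncomm_ring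
    rw [h2, neg_sq]
  -- symmetry of A
  have hAsym : ∀ p q, A q p = A p q := by
    have hA : Aᵀ = A := by
      rw [hAdef, hGdef]
      simp [Matrix.transpose_mul, Gmat, Matrix.diagonal_transpose, Matrix.mul_assoc]
    intro p q
    conv_lhs => rw [← hA]
    rfl
  -- generic trace expansion
  have expand : ∀ (B : Matrix (Fin N × Fin 2) (Fin N × Fin 2) ℝ) (d : Fin N × Fin 2 → ℝ),
      Matrix.trace ((B * Matrix.diagonal d) ^ 2)
        = ∑ p, ∑ q, (B p q * B q p) * (d q * d p) := by
    intro B d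
    have hB : B * Matrix.diagonal d = Matrix.of (fun p q => B p q * d q) := by
      ext p q; simp [Matrix.mul_diagonal]
    rw [pow_two, hB]
    simp only [Matrix.trace, Matrix.diag, Matrix.mul_apply, Matrix.of_apply]
    exact Finset.sum_congr rfl fun p _ => Finset.sum_congr rfl fun q _ => by ring
  -- both traces as double sums over entries of A
  have key : ∀ (f : Fin N → ℝ),
      Matrix.trace ((K * VIn f * Kᵀ * G) ^ 2)
        = ∑ p, ∑ q, (A p q * A q p) *
            (Real.exp ((if q.2 = 0 then (-2 : ℝ) else 2) * f q.1)
              * Real.exp ((if p.2 = 0 then (-2 : ℝ) else 2) * f p.1)) := by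
    intro f
    have h1 : K * VIn f * Kᵀ * G = K * (VIn f * Kᵀ * G) := by noncomm_ring
    rw [h1, trace_sq_comm]
    have h2 : VIn f * Kᵀ * G * K = VIn f * A := by rw [hAdef]; noncomm_ring
    rw [h2, trace_sq_comm, VIn, expand A]
  have hsA : Matrix.trace (A ^ 2) = ∑ p, ∑ q, A p q * A q p := by
    rw [pow_two]
    simp only [Matrix.trace, Matrix.diag, Matrix.mul_apply]
  have hGA : Matrix.trace (G ^ 2) = Matrix.trace (A ^ 2) := by
    have h1 : A = Kᵀ * (G * K) := by rw [hAdef, Matrix.mul_assoc]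
    rw [h1, trace_sq_comm]
    have h2 : G * K * Kᵀ = G := by rw [Matrix.mul_assoc, hKK, mul_one]
    rw [h2]
  have hGsum : Matrix.trace (G ^ 2) = 2 * ∑ a : Fin N, (g a) ^ 2 := by
    rw [hGdef]
    rw [pow_two, Gmat, Matrix.diagonal_mul_diagonal, Matrix.trace_diagonal,
      Fintype.sum_prod_type]
    rw [Finset.mul_sum]
    exact Finset.sum_congr rfl fun a _ => by
      simp [Fin.sum_univ_two]; ring
  -- per-entry inequality
  set C : ℝ := Real.cosh (2 * (2 * r)) with hCdef
  have hentry : ∀ p q : Fin N × Fin 2,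
      (A p q * A q p) * (Real.exp ((if q.2 = 0 then (-2 : ℝ) else 2) * rs q.1)
          * Real.exp ((if p.2 = 0 then (-2 : ℝ) else 2) * rs p.1))
        + (A p q * A q p) * (Real.exp ((if q.2 = 0 then (-2 : ℝ) else 2) * (- rs q.1))
          * Real.exp ((if p.2 = 0 then (-2 : ℝ) else 2) * (- rs p.1)))
        - 2 * (A p q * A q p)
        ≤ (A p q * A q p) * (2 * C - 2) := by
    intro p q
    have hx : 0 ≤ A p q * A q p := by rw [hAsym p q]; exact mul_self_nonneg _
    set cq : ℝ := if q.2 = 0 then (-2 : ℝ) else 2 with hcq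
    set cp : ℝ := if p.2 = 0 then (-2 : ℝ) else 2 with hcp
    set w : ℝ := cq * rs q.1 + cp * rs p.1 with hw
    have h1 : Real.exp (cq * rs q.1) * Real.exp (cp * rs p.1) = Real.exp w := by
      rw [← Real.exp_add]
    have h2 : Real.exp (cq * (- rs q.1)) * Real.exp (cp * (- rs p.1))
        = Real.exp (-w) := by
      rw [← Real.exp_add]; congr 1; rw [hw]; ring
    have habs : ∀ (c : ℝ) (a : Fin N), (c = -2 ∨ c = 2) → |c * rs a| ≤ 2 * r := by
      intro c a hc
      have h0 := (hrs a).1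
      have h1 := (hrs a).2
      rcases hc with h | h <;> subst h <;>
        rw [abs_mul, abs_of_nonneg h0] <;>
        simp [abs_of_nonpos, abs_of_nonneg] <;> linarith
    have hwbound : |w| ≤ 2 * (2 * r) := by
      have hq : |cq * rs q.1| ≤ 2 * r := by
        apply habs; rw [hcq]; split_ifs <;> simp
      have hp : |cp * rs p.1| ≤ 2 * r := by
        apply habs; rw [hcp]; split_ifs <;> simp
      calc |w| ≤ |cq * rs q.1| + |cp * rs p.1| := abs_add_le _ _
        _ ≤ 2 * (2 * r) := by linarith
    have hcosh : Real.exp w + Real.exp (-w) ≤ 2 * C := by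
      have h3 : Real.exp w + Real.exp (-w) = 2 * Real.cosh w := by
        rw [Real.cosh_eq]; ring
      have h4 : Real.cosh w ≤ C := by
        rw [hCdef]
        apply Real.cosh_le_cosh.mpr
        rw [abs_of_nonneg (by linarith : (0:ℝ) ≤ 2 * (2 * r))]
        exact hwbound
      linarith
    rw [h1, h2]
    nlinarith [hx, hcosh]
  -- assemble
  set T : ℝ := Matrix.trace ((V * G) ^ 2) with hTdef
  set S : ℝ := Matrix.trace (G ^ 2) with hSdef
  have ht : T = ∑ p, ∑ q, (A p q * A q p) *
      (Real.exp ((if q.2 = 0 then (-2 : ℝ) else 2) * rs q.1)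
        * Real.exp ((if p.2 = 0 then (-2 : ℝ) else 2) * rs p.1)) := key rs
  have hti : T = ∑ p, ∑ q, (A p q * A q p) *
      (Real.exp ((if q.2 = 0 then (-2 : ℝ) else 2) * (- rs q.1))
        * Real.exp ((if p.2 = 0 then (-2 : ℝ) else 2) * (- rs p.1))) := by
    rw [← htrace_eq]
    exact key (fun a => - rs a)
  have hS : S = ∑ p, ∑ q, A p q * A q p := by rw [hGA, hsA]
  have hmain : T + T - 2 * S ≤ (2 * C - 2) * S := by
    have hsum := Finset.sum_le_sum (fun p (_ : p ∈ Finset.univ) =>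
      Finset.sum_le_sum (fun q (_ : q ∈ Finset.univ) => hentry p q))
    have hlhs : ∑ p, ∑ q, ((A p q * A q p) *
        (Real.exp ((if q.2 = 0 then (-2 : ℝ) else 2) * rs q.1)
          * Real.exp ((if p.2 = 0 then (-2 : ℝ) else 2) * rs p.1))
        + (A p q * A q p) * (Real.exp ((if q.2 = 0 then (-2 : ℝ) else 2) * (- rs q.1))
          * Real.exp ((if p.2 = 0 then (-2 : ℝ) else 2) * (- rs p.1)))
        - 2 * (A p q * A q p)) = T + T - 2 * S := by
      simp only [Finset.sum_add_distrib, Finset.sum_sub_distrib, ← Finset.mul_sum]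
      rw [← ht, ← hti, ← hS]
    have hrhs : ∑ p, ∑ q, (A p q * A q p) * (2 * C - 2) = (2 * C - 2) * S := by
      simp only [← Finset.sum_mul]
      rw [← hS, mul_comm]
    rw [← hlhs, ← hrhs]
    exact hsum
  have hC2 : C = 2 * Real.sinh (2 * r) ^ 2 + 1 := by
    rw [hCdef, Real.cosh_two_mul, Real.cosh_sq]
    ring
  show (T - S) / 2 ≤ (2 * ∑ a : Fin N, (g a) ^ 2) * Real.sinh (2 * r) ^ 2
  rw [← hGsum]
  rw [hC2] at hmain
  ring_nf at hmain ⊢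
  linarith [hmain]
end
end

section
/- Every real 2N×2N matrix V that is symmetric, positive-definite, and symplectic (VΩVᵀ = Ω) can be written as V = K·D·Kᵀ, where K is a real 2N×2N orthogonal symplectic matrix (KᵀK = I and KΩKᵀ = Ω) and D = diag(e^{−2r₁}, e^{2r₁}, …, e^{−2r_N}, e^{2r_N}) for some r₁, …, r_N ≥ 0. -/
/-!
Let `T` and `J` be the operators of `V` and `Ω` on Euclidean space. Then `J` is an isometric
complex structure and `VΩV = Ω` reads `TJT = J`, so `J` maps the `μ`-eigenspace of `T` onto the
`μ⁻¹`-eigenspace. Choose unit eigenvectors `f₁, f₂, …` inductively: the span of the earlier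
`fₐ, Jfₐ` is invariant under `T` and `J`, hence so is its orthogonal complement, which therefore
contains an eigenvector `v`; if its eigenvalue is below `1`, replace `v` by `Jv`. The vectors
`Jfₐ, fₐ` are the columns of `K`, and `rₐ = ½ log μₐ`.
-/

open Matrix

noncomputable section

open Module Submodule
open scoped RealInnerProductSpace Kronecker
open WithLp (ofLp)

section ComplexStructure

open Module.End

variable {E : Type*} [NormedAddCommGroup E] [InnerProductSpace ℝ E] {T J : Module.End ℝ E}

lemma Module.End.inner_map_left_eq_neg (hJJ : ∀ x, J (J x) = -x)
    (hJ : ∀ x y, ⟪J x, J y⟫ = ⟪x, y⟫) (x y : E) : ⟪J x, y⟫ = -⟪x, J y⟫ := by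
  rw [← hJ x (J y), hJJ, inner_neg_right, neg_neg]

lemma Module.End.orthogonal_mem_invtSubmodule_of_skew (hJ : ∀ x y, ⟪J x, y⟫ = -⟪x, J y⟫)
    {p : Submodule ℝ E} (hp : p ∈ J.invtSubmodule) : pᗮ ∈ J.invtSubmodule :=
  fun x hx y hy ↦ neg_eq_zero.mp <| (hJ y x).symm.trans <| (mem_orthogonal p x).mp hx _ (hp hy)

lemma Module.End.span_range_mem_invtSubmodule {ι : Type*} {v : ι → E}
    (h : ∀ i, T (v i) ∈ span ℝ (Set.range v)) : span ℝ (Set.range v) ∈ T.invtSubmodule :=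
  span_le.mpr <| Set.range_subset_iff.mpr h

lemma Module.End.apply_map_eq_inv_smul (hTJT : ∀ x, T (J (T x)) = J x) {v : E} {μ : ℝ}
    (hμ : μ ≠ 0) (hv : T v = μ • v) : T (J v) = μ⁻¹ • J v := by
  have h := hTJT v
  rw [hv, map_smul, map_smul] at h
  exact (eq_inv_smul_iff₀ hμ).mpr h

lemma LinearMap.IsSymmetric.exists_eigenvector_mem [FiniteDimensional ℝ E] (hT : T.IsSymmetric)
    {U : Submodule ℝ E} (hU : U ≠ ⊥) (hUT : U ∈ T.invtSubmodule) :
    ∃ v ∈ U, v ≠ 0 ∧ ∃ μ : ℝ, T v = μ • v := by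
  have : Nontrivial U := nontrivial_iff_ne_bot.mpr hU
  obtain ⟨μ, hμ⟩ : ∃ μ : ℝ, HasEigenvalue (T.restrict hUT) μ :=
    ⟨_, (hT.restrict_invariant hUT).hasEigenvalue_iSup_of_finiteDimensional⟩
  obtain ⟨v, hv⟩ := hμ.exists_hasEigenvector
  exact ⟨v, v.2, by simpa using hv.2, μ, congrArg Subtype.val (mem_eigenspace_iff.mp hv.1)⟩

lemma Orthonormal.fin_cons {k : ℕ} {f : Fin k → E} (hf : Orthonormal ℝ f) {z : E}
    (hz : ‖z‖ = 1) (hzf : ∀ a, ⟪z, f a⟫ = 0) :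
    Orthonormal ℝ (Fin.cons z f : Fin (k + 1) → E) := by
  rw [orthonormal_iff_ite] at hf ⊢
  have hfz a : ⟪f a, z⟫ = 0 := by rw [real_inner_comm, hzf]
  simp [Fin.forall_fin_succ, hf, hzf, hfz, hz, (Fin.succ_ne_zero _).symm]

lemma exists_unit_eigenvector_one_le_mem [FiniteDimensional ℝ E] (hT : T.IsSymmetric)
    (hTpos : ∀ x, x ≠ 0 → 0 < ⟪x, T x⟫) (hJJ : ∀ x, J (J x) = -x)
    (hTJT : ∀ x, T (J (T x)) = J x) {U : Submodule ℝ E} (hU : U ≠ ⊥)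
    (hUT : U ∈ T.invtSubmodule) (hUJ : U ∈ J.invtSubmodule) :
    ∃ z ∈ U, ‖z‖ = 1 ∧ ∃ μ : ℝ, 1 ≤ μ ∧ T z = μ • z := by
  obtain ⟨v, hvU, hv0, μ, hv⟩ := hT.exists_eigenvector_mem hU hUT
  have hμ : 0 < μ := by
    have h := hTpos v hv0
    rw [hv, real_inner_smul_right] at h
    exact pos_of_mul_pos_left h real_inner_self_nonneg
  obtain ⟨w, hwU, hw0, ν, hν, hw⟩ : ∃ w ∈ U, w ≠ 0 ∧ ∃ ν : ℝ, 1 ≤ ν ∧ T w = ν • w := by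
    rcases le_or_gt 1 μ with h1 | h1
    · exact ⟨v, hvU, hv0, μ, h1, hv⟩
    · refine ⟨J v, hUJ hvU, fun h ↦ hv0 ?_, μ⁻¹, (one_le_inv₀ hμ).mpr h1.le,
        apply_map_eq_inv_smul hTJT hμ.ne' hv⟩
      simpa [h] using hJJ v
  exact ⟨‖w‖⁻¹ • w, U.smul_mem _ hwU, norm_smul_inv_norm hw0, ν, hν, by
    rw [map_smul, hw, smul_comm]⟩

/-- `J (f a)` comes first, matching the order of the two coordinates of a mode in `Omega` and
`VIn`. -/
def symplecticFrame {ι : Type*} (J : Module.End ℝ E) (f : ι → E) (p : ι × Fin 2) : E :=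
  ![J (f p.1), f p.1] p.2

section SymplecticFrame

variable {ι : Type*} {f : ι → E}

lemma map_symplecticFrame_zero (hJJ : ∀ x, J (J x) = -x) (a : ι) :
    J (symplecticFrame J f (a, 0)) = -symplecticFrame J f (a, 1) := by
  simp [symplecticFrame, hJJ]

lemma map_symplecticFrame_one (a : ι) :
    J (symplecticFrame J f (a, 1)) = symplecticFrame J f (a, 0) := by
  simp [symplecticFrame]

lemma apply_symplecticFrame (hTJT : ∀ x, T (J (T x)) = J x) {μ : ι → ℝ} (hμ : ∀ a, μ a ≠ 0)
    (hfT : ∀ a, T (f a) = μ a • f a) (p : ι × Fin 2) :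
    T (symplecticFrame J f p) = ![(μ p.1)⁻¹, μ p.1] p.2 • symplecticFrame J f p := by
  obtain ⟨a, i⟩ := p
  fin_cases i
  · simp [symplecticFrame, apply_map_eq_inv_smul hTJT (hμ a) (hfT a)]
  · simp [symplecticFrame, hfT]

lemma orthonormal_symplecticFrame (hJ : ∀ x y, ⟪J x, J y⟫ = ⟪x, y⟫) (hf : Orthonormal ℝ f)
    (hfJ : ∀ a b, ⟪f a, J (f b)⟫ = 0) : Orthonormal ℝ (symplecticFrame J f) := by
  classical
  have hJf a b : ⟪J (f a), f b⟫ = 0 := by rw [real_inner_comm, hfJ]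
  rw [orthonormal_iff_ite] at hf ⊢
  rintro ⟨a, i⟩ ⟨b, j⟩
  fin_cases i <;> fin_cases j <;> simp [symplecticFrame, hJ, hf, hfJ, hJf]

end SymplecticFrame

section Modes

variable {k : ℕ} {f : Fin k → E}

lemma inner_symplecticFrame_map (hJJ : ∀ x, J (J x) = -x)
    (hg : Orthonormal ℝ (symplecticFrame J f)) (p q : Fin k × Fin 2) :
    ⟪symplecticFrame J f p, J (symplecticFrame J f q)⟫ = Omega k p q := by
  obtain ⟨a, i⟩ := p
  obtain ⟨b, j⟩ := q
  fin_cases i <;> fin_cases j <;>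
    simp [map_symplecticFrame_zero hJJ, map_symplecticFrame_one, orthonormal_iff_ite.mp hg,
      Omega, Prod.ext_iff, neg_ite]

lemma inner_symplecticFrame_apply (hTJT : ∀ x, T (J (T x)) = J x) {r : Fin k → ℝ}
    (hfT : ∀ a, T (f a) = Real.exp (2 * r a) • f a) (hg : Orthonormal ℝ (symplecticFrame J f))
    (p q : Fin k × Fin 2) :
    ⟪symplecticFrame J f p, T (symplecticFrame J f q)⟫ = VIn r p q := by
  have hTg : T (symplecticFrame J f q) = VIn r q q • symplecticFrame J f q := by
    rw [apply_symplecticFrame hTJT (fun a ↦ (Real.exp_pos _).ne') hfT]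
    obtain ⟨b, j⟩ := q
    fin_cases j <;> simp [VIn, Real.exp_neg]
  rw [hTg, real_inner_smul_right, orthonormal_iff_ite.mp hg]
  by_cases h : p = q
  · simp [h]
  · simp [h, VIn]

theorem exists_orthonormal_eigenfamily [FiniteDimensional ℝ E] (hT : T.IsSymmetric)
    (hTpos : ∀ x, x ≠ 0 → 0 < ⟪x, T x⟫) (hJJ : ∀ x, J (J x) = -x)
    (hJ : ∀ x y, ⟪J x, J y⟫ = ⟪x, y⟫) (hTJT : ∀ x, T (J (T x)) = J x) :
    ∀ k : ℕ, 2 * k ≤ finrank ℝ E → ∃ f : Fin k → E, Orthonormal ℝ f ∧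
      (∀ a b, ⟪f a, J (f b)⟫ = 0) ∧ ∀ a, ∃ μ : ℝ, 1 ≤ μ ∧ T (f a) = μ • f a
  | 0, _ => ⟨Fin.elim0, ⟨fun a ↦ a.elim0, fun a ↦ a.elim0⟩, fun a ↦ a.elim0, fun a ↦ a.elim0⟩
  | k + 1, hk => by
    obtain ⟨f, hf, hfJ, hfT⟩ := exists_orthonormal_eigenfamily hT hTpos hJJ hJ hTJT k (by omega)
    choose μ hμ hfμ using hfT
    have hskew := inner_map_left_eq_neg hJJ hJ
    set W := span ℝ (Set.range (symplecticFrame J f))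
    have hW p : symplecticFrame J f p ∈ W := subset_span ⟨p, rfl⟩
    have hWT : W ∈ T.invtSubmodule := span_range_mem_invtSubmodule fun p ↦ by
      rw [apply_symplecticFrame hTJT (fun a ↦ by linarith [hμ a]) hfμ]
      exact W.smul_mem _ (hW p)
    have hWJ : W ∈ J.invtSubmodule := span_range_mem_invtSubmodule fun ⟨a, i⟩ ↦ by
      fin_cases i
      · simpa [map_symplecticFrame_zero hJJ] using W.neg_mem (hW (a, 1))
      · simpa [map_symplecticFrame_one] using hW (a, 0)
    have hWbot : Wᗮ ≠ ⊥ := by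
      intro h
      have hsum := W.finrank_add_finrank_orthogonal
      have hcard : finrank ℝ W ≤ k * 2 := (finrank_range_le_card _).trans (by simp)
      rw [h, finrank_bot] at hsum
      omega
    obtain ⟨z, hz, hz1, ν, hν, hzT⟩ := exists_unit_eigenvector_one_le_mem hT hTpos hJJ hTJT
      hWbot (hT.orthogonalComplement_mem_invtSubmodule hWT)
      (orthogonal_mem_invtSubmodule_of_skew hskew hWJ)
    have hJz : J z ∈ Wᗮ := orthogonal_mem_invtSubmodule_of_skew hskew hWJ hz
    have hzJz : ⟪z, J z⟫ = 0 := by linarith [hskew z z, real_inner_comm z (J z)]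
    have hzJf a : ⟪z, J (f a)⟫ = 0 := inner_left_of_mem_orthogonal (hW (a, 0)) hz
    have hfJz a : ⟪f a, J z⟫ = 0 := inner_right_of_mem_orthogonal (hW (a, 1)) hJz
    refine ⟨Fin.cons z f, hf.fin_cons hz1 fun a ↦ inner_left_of_mem_orthogonal (hW (a, 1)) hz,
      ?_, ?_⟩
    · simp [Fin.forall_fin_succ, hzJz, hfJ, hzJf, hfJz]
    · simp only [Fin.forall_fin_succ, Fin.cons_zero, Fin.cons_succ]
      exact ⟨⟨ν, hν, hzT⟩, fun a ↦ ⟨μ a, hμ a, hfμ a⟩⟩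

end Modes

end ComplexStructure

namespace Matrix

variable {n : Type*} [Fintype n] [DecidableEq n]

lemma toEuclideanLin_apply_apply (A B : Matrix n n ℝ) (x : EuclideanSpace ℝ n) :
    toEuclideanLin A (toEuclideanLin B x) = toEuclideanLin (A * B) x := by
  simp

lemma inner_toEuclideanLin_toEuclideanLin {A : Matrix n n ℝ} (hA : Aᵀ * A = 1)
    (x y : EuclideanSpace ℝ n) : ⟪toEuclideanLin A x, toEuclideanLin A y⟫ = ⟪x, y⟫ := by
  rw [← LinearMap.adjoint_inner_right, ← toEuclideanLin_conjTranspose_eq_adjoint,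
    conjTranspose_eq_transpose_of_trivial, toEuclideanLin_apply_apply, hA, toLpLin_one,
    LinearMap.id_apply]

lemma real_inner_toEuclideanLin (A : Matrix n n ℝ) (x y : EuclideanSpace ℝ n) :
    ⟪x, toEuclideanLin A y⟫ = ofLp x ⬝ᵥ A *ᵥ ofLp y :=
  inner_toEuclideanCLM A x y

lemma PosDef.inner_toEuclideanLin_pos {A : Matrix n n ℝ} (hA : A.PosDef)
    {x : EuclideanSpace ℝ n} (hx : x ≠ 0) : 0 < ⟪x, toEuclideanLin A x⟫ := by
  rw [real_inner_toEuclideanLin]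
  simpa using hA.dotProduct_mulVec_pos (x := ofLp x) (by simpa using hx)

variable {ι : Type*}

lemma transpose_mul_mul_of_eq_inner {g : ι → EuclideanSpace ℝ n} {M : Matrix n n ℝ}
    {D : Matrix ι ι ℝ} (h : ∀ p q, ⟪g p, toEuclideanLin M (g q)⟫ = D p q) :
    (of fun i p ↦ g p i)ᵀ * M * (of fun i p ↦ g p i) = D := by
  ext p q
  rw [← h, real_inner_toEuclideanLin, Matrix.mul_assoc]
  simp [mul_apply, dotProduct, mulVec]

lemma transpose_mul_self_of_orthonormal [DecidableEq ι] {g : ι → EuclideanSpace ℝ n}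
    (hg : Orthonormal ℝ g) : (of fun i p ↦ g p i)ᵀ * (of fun i p ↦ g p i) = 1 := by
  rw [← Matrix.mul_one (of fun i p ↦ g p i)ᵀ]
  exact transpose_mul_mul_of_eq_inner fun p q ↦ by
    rw [toLpLin_one, LinearMap.id_apply, orthonormal_iff_ite.mp hg, one_apply]

lemma eq_mul_mul_transpose_of_transpose_mul_mul {R : Type*} [CommRing R] {K M D : Matrix n n R}
    (hK : Kᵀ * K = 1) (h : Kᵀ * M * K = D) : M = K * D * Kᵀ := by
  have hK' : K * Kᵀ = 1 := mul_eq_one_comm.mp hK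
  rw [← h, ← Matrix.mul_assoc, ← Matrix.mul_assoc, hK', Matrix.one_mul, Matrix.mul_assoc, hK',
    Matrix.mul_one]

end Matrix

lemma omega_eq_one_kronecker (N : ℕ) : Omega N = 1 ⊗ₖ !![(0 : ℝ), 1; -1, 0] := by
  ext ⟨a, i⟩ ⟨b, j⟩
  simp [Omega, one_apply, ite_mul]

lemma omega_transpose_mul_self (N : ℕ) : (Omega N)ᵀ * Omega N = 1 := by
  have hJ : !![(0 : ℝ), 1; -1, 0]ᵀ * !![0, 1; -1, 0] = 1 := by
    ext i j
    fin_cases i <;> fin_cases j <;> simp [mul_apply]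
  rw [omega_eq_one_kronecker, ← kroneckerMap_transpose, ← mul_kronecker_mul, transpose_one,
    Matrix.one_mul, hJ, one_kronecker_one]

lemma omega_mul_self (N : ℕ) : Omega N * Omega N = -1 := by
  have hJ : !![(0 : ℝ), 1; -1, 0] * !![0, 1; -1, 0] = (-1 : ℝ) • 1 := by
    simp [one_fin_two]
  rw [omega_eq_one_kronecker, ← mul_kronecker_mul, Matrix.one_mul, hJ, kronecker_smul,
    one_kronecker_one, neg_one_smul]

theorem stmt_16_general (N : ℕ) (V : Matrix (Fin N × Fin 2) (Fin N × Fin 2) ℝ)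
    (hpos : V.PosDef)
    (hsymp : V * Omega N * Vᵀ = Omega N) :
    ∃ (K : Matrix (Fin N × Fin 2) (Fin N × Fin 2) ℝ) (r : Fin N → ℝ),
      Kᵀ * K = 1 ∧ K * Omega N * Kᵀ = Omega N ∧ (∀ a, 0 ≤ r a) ∧
        V = K * VIn r * Kᵀ := by
  set T := toEuclideanLin V
  set J := toEuclideanLin (Omega N)
  have hVΩV : V * Omega N * V = Omega N := by
    rwa [← conjTranspose_eq_transpose_of_trivial, hpos.isHermitian.eq] at hsymp
  have hJ := inner_toEuclideanLin_toEuclideanLin (omega_transpose_mul_self N)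
  have hJJ x : J (J x) = -x := by simp [J, toEuclideanLin_apply_apply, omega_mul_self]
  have hTJT x : T (J (T x)) = J x := by
    rw [toEuclideanLin_apply_apply, toEuclideanLin_apply_apply, hVΩV]
  obtain ⟨f, hf, hfJ, hfT⟩ := exists_orthonormal_eigenfamily
    (isSymmetric_toEuclideanLin_iff.mpr hpos.isHermitian) (fun _ ↦ hpos.inner_toEuclideanLin_pos)
    hJJ hJ hTJT N (by simp [mul_comm])
  choose μ hμ hfμ using hfT
  set r : Fin N → ℝ := fun a ↦ Real.log (μ a) / 2
  have hfT a : T (f a) = Real.exp (2 * r a) • f a := by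
    rw [mul_div_cancel₀ _ two_ne_zero, Real.exp_log (by linarith [hμ a]), hfμ]
  have hg := orthonormal_symplecticFrame hJ hf hfJ
  have hK := transpose_mul_self_of_orthonormal hg
  refine ⟨_, r, hK, ?_, fun a ↦ div_nonneg (Real.log_nonneg (hμ a)) zero_le_two, ?_⟩
  · exact (eq_mul_mul_transpose_of_transpose_mul_mul hK
      (transpose_mul_mul_of_eq_inner (inner_symplecticFrame_map hJJ hg))).symm
  · exact eq_mul_mul_transpose_of_transpose_mul_mul hK
      (transpose_mul_mul_of_eq_inner (inner_symplecticFrame_apply hTJT hfT hg))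

/-- Euler/Bloch–Messiah for pure Gaussian covariance matrices: every real
symmetric, positive-definite, symplectic (`VΩVᵀ = Ω`) 2N×2N matrix `V` can be written as
`V = K·D·Kᵀ` with `K` orthogonal symplectic and
`D = diag(e^{−2r₁}, e^{2r₁}, …, e^{−2r_N}, e^{2r_N})` for some `r₁, …, r_N ≥ 0`. -/
theorem stmt_16 (N : ℕ) (V : Matrix (Fin N × Fin 2) (Fin N × Fin 2) ℝ)
    (hsymm : V.IsSymm) (hpos : V.PosDef)
    (hsymp : V * Omega N * Vᵀ = Omega N) :
    ∃ (K : Matrix (Fin N × Fin 2) (Fin N × Fin 2) ℝ) (r : Fin N → ℝ),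
      Kᵀ * K = 1 ∧ K * Omega N * Kᵀ = Omega N ∧ (∀ a, 0 ≤ r a) ∧
        V = K * VIn r * Kᵀ :=
  stmt_16_general N V hpos hsymp
end
end
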